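/- arXiv:1302.4466 — 8 statements merged into one kernel-verified Lean document; each statement's English description precedes it below -/
import Mathlib

section
/- Let μ be a Borel probability measure on [0,∞) with μ ≠ δ₀. For every z ∈ ℂ with 0 < Im z < π, the point −e^z lies in the lower half-plane, η_μ(−e^z) ≠ 0, and the principal argument of (−e^z)/η_μ(−e^z) lies in the interval [0, Im z). -/
open MeasureTheory Filter

/-- ψ-transform of a measure on [0,∞) (viewed as a measure on ℝ). -/
noncomputable def psiR (μ : Measure ℝ) (z : ℂ) : ℂ :=
  ∫ s : ℝ, z * (s : ℂ) / (1 - z * (s : ℂ)) ∂μ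

/-- η-transform of a measure on [0,∞). -/
noncomputable def etaR (μ : Measure ℝ) (z : ℂ) : ℂ :=
  psiR μ z / (1 + psiR μ z)

/-!
Write `w = -exp z`, which lies in the lower half-plane, `f(s) = ws/(1 - ws)` and `A = ψ_μ(w) = ∫ f dμ`.
For `s > 0` we have `Im f(s) = Im w · s / |1 - ws|² < 0`, so `Im A < 0` as soon as `μ` charges
`(0, ∞)`, which is what `μ ≠ δ₀` means for a measure on `[0, ∞)`.

Since `w / η_μ(w) = w(1 + A)/A`, the quotient `(w / η_μ(w)) / (-w) = -(1 + 1/A)` has imaginary part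
`Im A / |A|² < 0`; as `-w = exp z` has argument `Im z`, this bounds `arg (w / η_μ(w))` strictly by
`Im z`. For the lower bound, `w · conj f(s) = |f(s)|² (1/s - w)` gives
`Im (w (1 + A) conj A) = -Im w · (∫ |f|² dμ - |A|²)`, which is nonnegative by Jensen's inequality.
-/

open Complex ComplexConjugate ProbabilityTheory

lemma sq_integral_le_integral_sq {Ω : Type*} [MeasurableSpace Ω] {μ : Measure Ω}
    [IsProbabilityMeasure μ] {X : Ω → ℝ} (hX : MemLp X 2 μ) :
    (∫ ω, X ω ∂μ) ^ 2 ≤ ∫ ω, X ω ^ 2 ∂μ := by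
  have hvar := variance_eq_sub hX
  simp only [Pi.pow_apply] at hvar
  linarith [variance_nonneg X μ]

lemma arg_lt_arg_of_im_div_neg {u v : ℂ} (hu : 0 ≤ u.im) (hv : 0 < v.im)
    (h : (u / v).im < 0) : u.arg < v.arg := by
  have hu0 : u ≠ 0 := by rintro rfl; simp at h
  have hv0 : v ≠ 0 := by rintro rfl; simp at hv
  have hdiff : (u / v).arg = u.arg - v.arg := by
    rw [arg_coe_angle_eq_iff_eq_toReal.mp (arg_div_coe_angle hu0 hv0), ← Real.Angle.coe_sub,
      Real.Angle.toReal_coe_eq_self_iff]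
    have := arg_lt_pi_iff.mpr (Or.inr hv.ne')
    constructor <;> linarith [arg_nonneg_iff.mpr hu, arg_le_pi u, arg_nonneg_iff.mpr hv.le]
  linarith [arg_neg_iff.mpr h]

lemma measure_Ioi_pos_of_ne_dirac {μ : Measure ℝ} [IsProbabilityMeasure μ]
    (hsupp : μ (Set.Iio 0) = 0) (hμ : μ ≠ Measure.dirac 0) : 0 < μ (Set.Ioi 0) := by
  refine pos_iff_ne_zero.mpr fun hpos => hμ ?_
  have hzero : ∀ᵐ s ∂μ, s ∈ ({0} : Finset ℝ) := by
    have hcompl : μ ({0}ᶜ) = 0 := by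
      rw [← Set.Iio_union_Ioi]; exact measure_union_null hsupp hpos
    filter_upwards [measure_eq_zero_iff_ae_notMem.mp hcompl] with s hs
    simpa using hs
  have hdirac := Measure.ae_mem_finset_iff.mp hzero
  rw [Finset.sum_singleton] at hdirac
  have hone : μ {0} = 1 := by
    simpa using (congrArg (fun ν : Measure ℝ => ν Set.univ) hdirac).symm
  rwa [hone, one_smul] at hdirac

noncomputable def psiIntegrand (w : ℂ) (s : ℝ) : ℂ := w * s / (1 - w * s)

section psiIntegrand

variable {w : ℂ}

lemma one_sub_mul_ofReal_ne_zero (hw : w.im ≠ 0) (s : ℝ) : 1 - w * s ≠ 0 := by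
  intro h
  have him : w.im * s = 0 := by simpa using congrArg im h
  obtain rfl : s = 0 := (mul_eq_zero.mp him).resolve_left hw
  simp at h

lemma im_psiIntegrand (s : ℝ) : (psiIntegrand w s).im = w.im * s / normSq (1 - w * s) := by
  simp only [psiIntegrand, div_im, mul_im, mul_re, sub_re, sub_im, one_re, one_im, ofReal_re,
    ofReal_im]
  ring

lemma mul_conj_psiIntegrand (s : ℝ) :
    w * conj (psiIntegrand w s) = (‖psiIntegrand w s‖ ^ 2 : ℝ) * (s⁻¹ - w) := by
  rcases eq_or_ne (psiIntegrand w s) 0 with h0 | h0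
  · simp [h0]
  have hw : w ≠ 0 := by rintro rfl; simp [psiIntegrand] at h0
  have hs : (s : ℂ) ≠ 0 := by rintro hs; simp [psiIntegrand, hs] at h0
  have hd : 1 - w * s ≠ 0 := by rintro hd; simp [psiIntegrand, hd] at h0
  have hdiv : w / psiIntegrand w s = s⁻¹ - w := by
    simp only [psiIntegrand]
    field_simp
    push_cast
    field_simp
  calc w * conj (psiIntegrand w s)
      = psiIntegrand w s * conj (psiIntegrand w s) * (w / psiIntegrand w s) := by
        field_simp
    _ = _ := by rw [mul_conj', hdiv]; push_cast; rfl

lemma im_mul_conj_psiIntegrand (s : ℝ) :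
    (w * conj (psiIntegrand w s)).im = -w.im * ‖psiIntegrand w s‖ ^ 2 := by
  rw [mul_conj_psiIntegrand, im_ofReal_mul, sub_im, ofReal_im]
  ring

lemma norm_psiIntegrand_le (hw : w.im ≠ 0) (s : ℝ) :
    ‖psiIntegrand w s‖ ≤ ‖w‖ / |w.im| := by
  have hd := one_sub_mul_ofReal_ne_zero hw s
  have him : |w.im| * |s| ≤ ‖1 - w * s‖ := by
    simpa [abs_mul] using abs_im_le_norm (1 - w * s)
  rw [le_div_iff₀ (abs_pos.mpr hw), psiIntegrand, norm_div, div_mul_eq_mul_div,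
    div_le_iff₀ (norm_pos_iff.mpr hd), norm_mul, norm_real, Real.norm_eq_abs]
  calc ‖w‖ * |s| * |w.im| = ‖w‖ * (|w.im| * |s|) := by ring
    _ ≤ ‖w‖ * ‖1 - w * s‖ := by gcongr

lemma continuous_psiIntegrand (hw : w.im ≠ 0) : Continuous (psiIntegrand w) := by
  unfold psiIntegrand
  exact (continuous_const.mul continuous_ofReal).div (by fun_prop)
    (one_sub_mul_ofReal_ne_zero hw)

lemma memLp_psiIntegrand {μ : Measure ℝ} [IsFiniteMeasure μ] (hw : w.im ≠ 0) (p : ENNReal) :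
    MemLp (psiIntegrand w) p μ :=
  .of_bound (continuous_psiIntegrand hw).aestronglyMeasurable _
    (ae_of_all _ (norm_psiIntegrand_le hw))

end psiIntegrand

lemma psiR_eq_integral (μ : Measure ℝ) (w : ℂ) : psiR μ w = ∫ s, psiIntegrand w s ∂μ := rfl

section psiR

variable {μ : Measure ℝ} {w : ℂ}

lemma im_psiR_neg [IsFiniteMeasure μ] (hw : w.im < 0) (hsupp : μ (Set.Iio 0) = 0)
    (hpos : 0 < μ (Set.Ioi 0)) : (psiR μ w).im < 0 := by
  have hint := (memLp_psiIntegrand (μ := μ) hw.ne 1).integrable le_rfl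
  have him : (psiR μ w).im = ∫ s, (psiIntegrand w s).im ∂μ := (integral_im hint).symm
  have hnonneg : 0 ≤ᵐ[μ] fun s => -(psiIntegrand w s).im := by
    filter_upwards [measure_eq_zero_iff_ae_notMem.mp hsupp] with s hs
    rw [im_psiIntegrand, Pi.zero_apply, neg_nonneg]
    exact div_nonpos_of_nonpos_of_nonneg
      (mul_nonpos_of_nonpos_of_nonneg hw.le (not_lt.mp hs)) (normSq_nonneg _)
  have hsupport : Set.Ioi 0 ⊆ Function.support fun s => -(psiIntegrand w s).im := by
    intro s hs
    rw [Function.mem_support, im_psiIntegrand, neg_ne_zero]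
    exact div_ne_zero (mul_ne_zero hw.ne hs.ne')
      (normSq_pos.mpr (one_sub_mul_ofReal_ne_zero hw.ne s)).ne'
  have hneg_pos := (integral_pos_iff_support_of_nonneg_ae hnonneg hint.im.neg).mpr
    (hpos.trans_le (measure_mono hsupport))
  rw [integral_neg] at hneg_pos
  linarith

lemma im_mul_conj_psiR [IsFiniteMeasure μ] (hw : w.im ≠ 0) :
    (w * conj (psiR μ w)).im = -w.im * ∫ s, ‖psiIntegrand w s‖ ^ 2 ∂μ := by
  have hint : Integrable (fun s => w * conj (psiIntegrand w s)) μ :=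
    (conjCLE.toContinuousLinearMap.integrable_comp
      ((memLp_psiIntegrand hw 1).integrable le_rfl)).const_mul w
  calc (w * conj (psiR μ w)).im = (∫ s, w * conj (psiIntegrand w s) ∂μ).im := by
        rw [psiR_eq_integral, integral_const_mul, integral_conj]
    _ = ∫ s, (w * conj (psiIntegrand w s)).im ∂μ := (integral_im hint).symm
    _ = -w.im * ∫ s, ‖psiIntegrand w s‖ ^ 2 ∂μ := by
        simp_rw [im_mul_conj_psiIntegrand, integral_const_mul]

lemma normSq_psiR_le [IsProbabilityMeasure μ] (hw : w.im ≠ 0) :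
    normSq (psiR μ w) ≤ ∫ s, ‖psiIntegrand w s‖ ^ 2 ∂μ :=
  calc normSq (psiR μ w) = ‖psiR μ w‖ ^ 2 := (Complex.sq_norm _).symm
    _ ≤ (∫ s, ‖psiIntegrand w s‖ ∂μ) ^ 2 := by
      gcongr; exact norm_integral_le_integral_norm _
    _ ≤ ∫ s, ‖psiIntegrand w s‖ ^ 2 ∂μ :=
      sq_integral_le_integral_sq (memLp_psiIntegrand hw 2).norm

lemma im_mul_one_add_psiR_mul_conj_nonneg [IsProbabilityMeasure μ] (hw : w.im < 0) :
    0 ≤ (w * (1 + psiR μ w) * conj (psiR μ w)).im := by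
  have hexpand : w * (1 + psiR μ w) * conj (psiR μ w)
      = w * conj (psiR μ w) + (normSq (psiR μ w) : ℝ) * w := by
    rw [mul_add, mul_one, add_mul, mul_assoc w, mul_conj]
    ring
  rw [hexpand, add_im, im_ofReal_mul, im_mul_conj_psiR hw.ne]
  nlinarith [normSq_psiR_le (μ := μ) hw.ne]

end psiR

section etaR

variable {μ : Measure ℝ} {w : ℂ}

lemma etaR_ne_zero (hA : (psiR μ w).im < 0) : etaR μ w ≠ 0 := by
  have hA0 : psiR μ w ≠ 0 := fun h => by simp [h] at hA
  have hA1 : 1 + psiR μ w ≠ 0 := fun h => by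
    have := congrArg im h
    simp only [add_im, one_im, zero_im, zero_add] at this
    linarith
  exact div_ne_zero hA0 hA1

lemma div_etaR (μ : Measure ℝ) (w : ℂ) :
    w / etaR μ w = w * (1 + psiR μ w) / psiR μ w :=
  div_div_eq_mul_div _ _ _

lemma im_div_etaR_nonneg [IsProbabilityMeasure μ] (hw : w.im < 0) : 0 ≤ (w / etaR μ w).im := by
  rw [div_etaR, div_eq_mul_inv, inv_def, ← mul_assoc, im_mul_ofReal]
  exact mul_nonneg (im_mul_one_add_psiR_mul_conj_nonneg hw) (inv_nonneg.mpr (normSq_nonneg _))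

lemma im_div_etaR_div_neg_neg (hw : w ≠ 0) (hA : (psiR μ w).im < 0) :
    (w / etaR μ w / -w).im < 0 := by
  have hA0 : psiR μ w ≠ 0 := fun h => by simp [h] at hA
  have : w / etaR μ w / -w = -(1 + (psiR μ w)⁻¹) := by
    rw [div_etaR]
    field_simp
    ring
  rw [this, neg_im, add_im, one_im, zero_add, inv_im, neg_div, neg_neg]
  exact div_neg_of_neg_of_pos hA (normSq_pos.mpr hA0)

end etaR

theorem stmt3 (μ : Measure ℝ) [IsProbabilityMeasure μ]
    (hsupp : μ (Set.Iio 0) = 0) (hμ : μ ≠ Measure.dirac 0)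
    (z : ℂ) (h1 : 0 < z.im) (h2 : z.im < Real.pi) :
    (-Complex.exp z).im < 0 ∧ etaR μ (-Complex.exp z) ≠ 0 ∧
      ((-Complex.exp z) / etaR μ (-Complex.exp z)).arg ∈ Set.Ico 0 z.im := by
  have hexp : 0 < (exp z).im := by
    rw [exp_im]
    exact mul_pos (Real.exp_pos _) (Real.sin_pos_of_pos_of_lt_pi h1 h2)
  have harg : (exp z).arg = z.im := by
    rw [arg_exp, toIocMod_eq_self]
    constructor <;> linarith
  set w := -exp z
  have hw : w.im < 0 := by simpa [w] using hexp
  have hA : (psiR μ w).im < 0 := im_psiR_neg hw hsupp (measure_Ioi_pos_of_ne_dirac hsupp hμ)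
  have hnonneg := im_div_etaR_nonneg (μ := μ) hw
  refine ⟨hw, etaR_ne_zero hA, arg_nonneg_iff.mpr hnonneg, ?_⟩
  rw [← harg, ← neg_neg (exp z)]
  exact arg_lt_arg_of_im_div_neg hnonneg (by simpa [w] using hexp)
    (im_div_etaR_div_neg_neg (neg_ne_zero.mpr (exp_ne_zero z)) hA)
end

section
/- Let μ be a Borel probability measure on [0,∞) with μ ≠ δ₀. For every z in the upper half-plane ℂ⁺, η_μ(z) ≠ 0 and the principal argument of z/η_μ(z) lies in the half-open interval (−π + arg z, 0]. -/
open MeasureTheory Filter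

/-!
With the weight `w(s) = |1 - z s|⁻²` and the moments `P = ∫ w`, `Q = ∫ s w`, `R = ∫ s² w`,
one has `ψ(z) = z Q - |z|² R` and `1 + ψ(z) = P - z̄ Q`. Since `μ ≠ δ₀` lives on
`[0, ∞)`, `Q > 0`, so `ψ`, `1 + ψ` and `z (1 + ψ)` all lie in the upper half-plane, and
`z / η = z (1 + ψ) / ψ`. Hence `arg (z / η) = arg (z (1 + ψ)) - arg ψ > arg z - π`,
while `Im (z / η)` has the sign of `Q² - P R ≤ 0` (Cauchy–Schwarz), which forces
`arg (z / η) ≤ 0`.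
-/

open Complex ComplexConjugate Set

namespace Complex

lemma arg_pos_of_im_pos {w : ℂ} (hw : 0 < w.im) : 0 < w.arg :=
  (arg_nonneg_iff.2 hw.le).lt_of_ne fun h => hw.ne' (arg_eq_zero_iff.1 h.symm).2

lemma arg_lt_pi_of_im_pos {w : ℂ} (hw : 0 < w.im) : w.arg < Real.pi :=
  arg_lt_pi_iff.2 (Or.inr hw.ne')

lemma arg_nonpos_of_im_nonpos {w : ℂ} (hw : w.im ≤ 0) (hπ : w.arg < Real.pi) :
    w.arg ≤ 0 := by
  rcases hw.lt_or_eq with hneg | hzero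
  · exact (arg_neg_iff.2 hneg).le
  · have hre : 0 ≤ w.re := (arg_lt_pi_iff.1 hπ).resolve_right (not_not.2 hzero)
    exact (arg_eq_zero_iff.2 ⟨hre, hzero⟩).le

lemma arg_div_of_im_pos {a b : ℂ} (ha : 0 < a.im) (hb : 0 < b.im) :
    (a / b).arg = a.arg - b.arg := by
  have ha0 : a ≠ 0 := fun h => by simp [h] at ha
  have hb0 : b ≠ 0 := fun h => by simp [h] at hb
  have hinv : b⁻¹.arg = -b.arg := by
    rw [arg_inv, if_neg (arg_lt_pi_of_im_pos hb).ne]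
  have hsum : (a * b⁻¹).arg = a.arg + b⁻¹.arg := by
    refine (arg_mul_eq_add_arg_iff ha0 (inv_ne_zero hb0)).2 ⟨?_, ?_⟩ <;>
    linarith [arg_pos_of_im_pos ha, arg_lt_pi_of_im_pos ha, arg_pos_of_im_pos hb,
      arg_lt_pi_of_im_pos hb]
  rw [div_eq_mul_inv, hsum, hinv, sub_eq_add_neg]

lemma one_sub_mul_ofReal_ne_zero {z : ℂ} (hz : 0 < z.im) (s : ℝ) : 1 - z * s ≠ 0 := by
  intro h
  have him : z.im * s = 0 := by simpa using congrArg im h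
  rcases mul_eq_zero.1 him with h' | h'
  · exact hz.ne' h'
  · simp [h'] at h

end Complex

lemma eta_ne_zero_and_arg_div_eta_mem_of_moments {z ψ : ℂ} {P Q R : ℝ} (hz : 0 < z.im)
    (hP : 0 < P) (hQ : 0 < Q) (hPQR : Q ^ 2 ≤ P * R) (hψ : ψ = z * Q - normSq z * R)
    (hψ' : 1 + ψ = P - conj z * Q) :
    ψ / (1 + ψ) ≠ 0 ∧ (z / (ψ / (1 + ψ))).arg ∈ Ioc (-Real.pi + z.arg) 0 := by
  have hψim : 0 < ψ.im := by rw [hψ]; simpa using mul_pos hz hQ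
  have hψ'im : 0 < (1 + ψ).im := by simpa using hψim
  have hA : z * (1 + ψ) = z * P - normSq z * Q := by
    rw [hψ', ← mul_conj]; ring
  have hAim : 0 < (z * (1 + ψ)).im := by rw [hA]; simpa using mul_pos hz hP
  have hψ0 : ψ ≠ 0 := fun h => by simp [h] at hψim
  have hψ'0 : 1 + ψ ≠ 0 := fun h => by simp [h] at hψ'im
  refine ⟨div_ne_zero hψ0 hψ'0, ?_⟩
  have hdiv : z / (ψ / (1 + ψ)) = z * (1 + ψ) / ψ := by field_simp
  have hcross : (z * (1 + ψ) / ψ).im ≤ 0 := by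
    rw [div_im, ← sub_div, hA, hψ]
    refine div_nonpos_of_nonpos_of_nonneg ?_ (normSq_nonneg _)
    simp only [sub_re, sub_im, mul_re, mul_im, ofReal_re, ofReal_im, mul_zero, sub_zero,
      zero_mul, add_zero]
    nlinarith [mul_nonneg (mul_nonneg (normSq_nonneg z) hz.le) (sub_nonneg.2 hPQR)]
  have harg := arg_div_of_im_pos hAim hψim
  have hlow : z.arg < (z * (1 + ψ)).arg := by
    have := arg_div_of_im_pos hAim hz
    rw [mul_div_cancel_left₀ _ (fun h => by simp [h] at hz : z ≠ 0)] at this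
    linarith [arg_pos_of_im_pos hψ'im]
  have hup : (z * (1 + ψ) / ψ).arg ≤ 0 := by
    refine arg_nonpos_of_im_nonpos hcross ?_
    rw [harg]
    linarith [arg_lt_pi_of_im_pos hAim, arg_pos_of_im_pos hψim]
  rw [hdiv]
  exact ⟨by linarith [arg_lt_pi_of_im_pos hψim], hup⟩

lemma measure_compl_singleton_ne_zero_of_ne_dirac {α : Type*} [MeasurableSpace α]
    [MeasurableSingletonClass α] {μ : Measure α} [IsProbabilityMeasure μ] {a : α}
    (hμ : μ ≠ Measure.dirac a) : μ {a}ᶜ ≠ 0 := by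
  contrapose! hμ
  have hself : μ.restrict {a} = μ := Measure.restrict_eq_self_of_ae_mem (mem_ae_iff.2 hμ)
  have hone : μ {a} = 1 := (prob_compl_eq_zero_iff (measurableSet_singleton a)).1 hμ
  rw [← hself, Measure.restrict_singleton, hone, one_smul]

lemma sq_integral_mul_le_integral_mul_integral_sq_mul {α : Type*} [MeasurableSpace α]
    {μ : Measure α} {f w : α → ℝ} (hw : 0 ≤ w) (hwi : Integrable w μ)
    (hfw : Integrable (fun x => f x * w x) μ)
    (hffw : Integrable (fun x => f x ^ 2 * w x) μ) :
    (∫ x, f x * w x ∂μ) ^ 2 ≤ (∫ x, w x ∂μ) * ∫ x, f x ^ 2 * w x ∂μ := by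
  have hquad : ∀ t : ℝ, 0 ≤ (∫ x, f x ^ 2 * w x ∂μ) * (t * t)
      + 2 * (∫ x, f x * w x ∂μ) * t + ∫ x, w x ∂μ := fun t => calc
    0 ≤ ∫ x, (t * f x + 1) ^ 2 * w x ∂μ :=
      integral_nonneg fun x => mul_nonneg (sq_nonneg _) (hw x)
    _ = ∫ x, (t * t * (f x ^ 2 * w x) + (2 * t * (f x * w x) + w x)) ∂μ :=
      integral_congr_ae (ae_of_all _ fun x => by ring)
    _ = _ := by
      rw [integral_add (g := fun x => 2 * t * (f x * w x) + w x) (hffw.const_mul _)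
          ((hfw.const_mul _).add hwi),
        integral_add (hfw.const_mul _) hwi, integral_const_mul, integral_const_mul]
      ring
  have := discrim_le_zero hquad
  rw [discrim] at this
  linarith

lemma integral_const_mul_ofReal_sub {α : Type*} [MeasurableSpace α] {μ : Measure α}
    {f g : α → ℝ} (hf : Integrable f μ) (hg : Integrable g μ) (c d : ℂ) :
    ∫ x, (c * f x - d * g x : ℂ) ∂μ = c * ↑(∫ x, f x ∂μ) - d * ↑(∫ x, g x ∂μ) := by
  rw [integral_sub (f := fun x => c * (f x : ℂ)) (g := fun x => d * (g x : ℂ))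
    ((hf.ofReal (𝕜 := ℂ)).const_mul c) ((hg.ofReal (𝕜 := ℂ)).const_mul d),
    integral_const_mul, integral_const_mul, integral_complex_ofReal,
    integral_complex_ofReal]

/-- Up to this weight, the integrands of `ψ` and `1 + ψ` are polynomials in `s`. -/
noncomputable def resolventWeight (z : ℂ) (s : ℝ) : ℝ :=
  (normSq (1 - z * s))⁻¹

section ResolventWeight

variable {z : ℂ} {μ : Measure ℝ}

lemma resolventWeight_pos (hz : 0 < z.im) (s : ℝ) : 0 < resolventWeight z s :=
  inv_pos.2 (normSq_pos.2 (one_sub_mul_ofReal_ne_zero hz s))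

lemma continuous_resolventWeight (hz : 0 < z.im) : Continuous (resolventWeight z) :=
  (continuous_normSq.comp (by fun_prop)).inv₀ fun s => (normSq_pos.2
    (one_sub_mul_ofReal_ne_zero hz s)).ne'

lemma one_add_sq_mul_resolventWeight_le (hz : 0 < z.im) (s : ℝ) :
    (1 + s ^ 2) * resolventWeight z s ≤ (normSq z + 1) / z.im ^ 2 := by
  have hN : 0 < normSq (1 - z * s) := normSq_pos.2 (one_sub_mul_ofReal_ne_zero hz s)
  rw [resolventWeight, ← div_eq_mul_inv, div_le_div_iff₀ hN (by positivity)]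
  have hexp : normSq (1 - z * s) = (1 - z.re * s) ^ 2 + (z.im * s) ^ 2 := by
    simp [normSq_apply]; ring
  rw [hexp, normSq_apply]
  -- the difference is `(Re z - |z|² s)² + (1 - Re z · s)²`
  nlinarith [sq_nonneg (z.re - (z.re * z.re + z.im * z.im) * s), sq_nonneg (1 - z.re * s)]

lemma integrable_mul_resolventWeight [IsFiniteMeasure μ] (hz : 0 < z.im)
    {f : ℝ → ℝ} (hf : Continuous f) (hbound : ∀ s, |f s| ≤ 1 + s ^ 2) :
    Integrable (fun s => f s * resolventWeight z s) μ := by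
  refine (integrable_const ((normSq z + 1) / z.im ^ 2)).mono'
    (hf.mul (continuous_resolventWeight hz)).aestronglyMeasurable (ae_of_all _ fun s => ?_)
  rw [Real.norm_eq_abs, abs_mul, abs_of_pos (resolventWeight_pos hz s)]
  exact (mul_le_mul_of_nonneg_right (hbound s) (resolventWeight_pos hz s).le).trans
    (one_add_sq_mul_resolventWeight_le hz s)

lemma integrable_resolventWeight [IsFiniteMeasure μ] (hz : 0 < z.im) :
    Integrable (resolventWeight z) μ := by
  simpa using integrable_mul_resolventWeight (μ := μ) (f := fun _ => 1) hz continuous_const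
    fun s => by simp [sq_nonneg]

lemma integrable_id_mul_resolventWeight [IsFiniteMeasure μ] (hz : 0 < z.im) :
    Integrable (fun s => s * resolventWeight z s) μ :=
  integrable_mul_resolventWeight hz continuous_id
    fun s => by nlinarith [abs_nonneg s, sq_abs s, sq_nonneg (|s| - 1)]

lemma integrable_sq_mul_resolventWeight [IsFiniteMeasure μ] (hz : 0 < z.im) :
    Integrable (fun s => s ^ 2 * resolventWeight z s) μ :=
  integrable_mul_resolventWeight hz (continuous_pow 2)
    fun s => by rw [abs_of_nonneg (sq_nonneg s)]; linarith

lemma inv_one_sub_mul_ofReal (s : ℝ) :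
    (1 - z * s)⁻¹ = resolventWeight z s * (1 - conj z * s) := by
  rw [inv_def, resolventWeight]
  push_cast
  simp [map_sub, map_mul, conj_ofReal, mul_comm]

lemma mul_ofReal_div_one_sub_mul_ofReal (s : ℝ) :
    z * s / (1 - z * s) = z * ↑(s * resolventWeight z s)
      - normSq z * ↑(s ^ 2 * resolventWeight z s) := by
  rw [div_eq_mul_inv, inv_one_sub_mul_ofReal, ← mul_conj]
  push_cast
  ring

lemma psiR_eq_moments [IsFiniteMeasure μ] (hz : 0 < z.im) :
    psiR μ z = z * ↑(∫ s, s * resolventWeight z s ∂μ)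
      - normSq z * ↑(∫ s, s ^ 2 * resolventWeight z s ∂μ) := by
  simp_rw [psiR, mul_ofReal_div_one_sub_mul_ofReal]
  exact integral_const_mul_ofReal_sub (integrable_id_mul_resolventWeight hz)
    (integrable_sq_mul_resolventWeight hz) _ _

lemma one_add_psiR_eq_moments [IsProbabilityMeasure μ] (hz : 0 < z.im) :
    1 + psiR μ z = ↑(∫ s, resolventWeight z s ∂μ)
      - conj z * ↑(∫ s, s * resolventWeight z s ∂μ) := by
  have hint : Integrable (fun s : ℝ => z * s / (1 - z * s)) μ := by
    simp_rw [mul_ofReal_div_one_sub_mul_ofReal]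
    exact ((integrable_id_mul_resolventWeight hz).ofReal.const_mul _).sub
      ((integrable_sq_mul_resolventWeight hz).ofReal.const_mul _)
  have hpt : ∀ s : ℝ, 1 + z * s / (1 - z * s)
      = 1 * ↑(resolventWeight z s) - conj z * ↑(s * resolventWeight z s) := by
    intro s
    have hinv : 1 + z * s / (1 - z * s) = (1 - z * s)⁻¹ := by
      field_simp [one_sub_mul_ofReal_ne_zero hz s]
      ring
    rw [hinv, inv_one_sub_mul_ofReal]
    push_cast
    ring
  calc 1 + psiR μ z = ∫ s : ℝ, (1 + z * s / (1 - z * s)) ∂μ := by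
        rw [integral_add (integrable_const _) hint, integral_const, probReal_univ, one_smul,
          psiR]
    _ = _ := by
      simp_rw [hpt]
      rw [integral_const_mul_ofReal_sub (integrable_resolventWeight hz)
        (integrable_id_mul_resolventWeight hz), one_mul]

lemma integral_resolventWeight_pos [IsFiniteMeasure μ] [NeZero μ]
    (hz : 0 < z.im) : 0 < ∫ s, resolventWeight z s ∂μ := by
  refine (integral_pos_iff_support_of_nonneg (fun s => (resolventWeight_pos hz s).le)
    (integrable_resolventWeight hz)).2 ?_
  rw [Function.support_eq_univ fun s => (resolventWeight_pos hz s).ne']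
  exact Measure.measure_univ_pos.2 (NeZero.ne μ)

lemma integral_id_mul_resolventWeight_pos [IsFiniteMeasure μ]
    (hz : 0 < z.im) (hsupp : μ (Iio 0) = 0) (hζ : μ {0}ᶜ ≠ 0) :
    0 < ∫ s, s * resolventWeight z s ∂μ := by
  have hnonneg : ∀ᵐ s ∂μ, 0 ≤ s := ae_iff.2 (by simp only [not_le]; exact hsupp)
  refine (integral_pos_iff_support_of_nonneg_ae
    (hnonneg.mono fun s hs => mul_nonneg hs (resolventWeight_pos hz s).le)
    (integrable_id_mul_resolventWeight hz)).2 ?_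
  have hsupport : Function.support (fun s => s * resolventWeight z s) = {0}ᶜ := by
    ext s; simp [(resolventWeight_pos hz s).ne']
  rw [hsupport]
  exact pos_iff_ne_zero.2 hζ

end ResolventWeight

theorem stmt4 (μ : Measure ℝ) [IsProbabilityMeasure μ]
    (hsupp : μ (Set.Iio 0) = 0) (hμ : μ ≠ Measure.dirac 0)
    (z : ℂ) (hz : 0 < z.im) :
    etaR μ z ≠ 0 ∧ (z / etaR μ z).arg ∈ Set.Ioc (-Real.pi + z.arg) 0 :=
  eta_ne_zero_and_arg_div_eta_mem_of_moments hz (integral_resolventWeight_pos hz)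
    (integral_id_mul_resolventWeight_pos hz hsupp
      (measure_compl_singleton_ne_zero_of_ne_dirac hμ))
    (sq_integral_mul_le_integral_mul_integral_sq_mul (fun s => (resolventWeight_pos hz s).le)
      (integrable_resolventWeight hz) (integrable_id_mul_resolventWeight hz)
      (integrable_sq_mul_resolventWeight hz))
    (psiR_eq_moments hz) (one_add_psiR_eq_moments hz)
end

section
/- Let μ be a Borel probability measure on [0,∞) with μ ≠ δ₀, let a ∈ ℝ, b ≥ 0, and let ρ be a finite positive Borel measure on [0,∞). Suppose that for all z ∈ ℂ∖[0,∞) one has z/η_μ(z) = exp(a − bz + ∫_{[0,∞)} (1+zs)/(z−s) dρ(s)). Then b = 0. -/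
/-!
On the negative half-line `z = -x` everything is real: `ψ_μ(-x) = -P(x)` with
`P(x) = ∫ xs/(1+xs) dμ ∈ [0, 1]`, and `P(x) ≥ μ[ε,∞)/2` as soon as `xε ≥ 1`, so
`|z / η_μ(z)| = x(1 - P)/P` grows at most linearly in `x`. The right-hand side has modulus
`exp (a + bx + ∫ (xs-1)/(x+s) dρ) ≥ exp (a + bx - ρ[0,∞))` for `x ≥ 1`, which outgrows every
linear function when `b > 0`.
-/

open MeasureTheory Filter

/-- Ω = ℂ ∖ [0,∞) -/
def OmegaR : Set ℂ := {z : ℂ | ¬ (z.im = 0 ∧ 0 ≤ z.re)}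

lemma exists_pos_measure_Ici_ne_zero {μ : Measure ℝ} [IsProbabilityMeasure μ]
    (hμ₀ : ∀ᵐ s ∂μ, 0 ≤ s) (hμ : μ ≠ Measure.dirac 0) :
    ∃ ε > 0, μ (Set.Ici ε) ≠ 0 := by
  by_contra! hnull
  have hsmall : ∀ᵐ s ∂μ, ∀ n : ℕ, s < 1 / ((n : ℝ) + 1) := ae_all_iff.2 fun n : ℕ ↦ by
    simpa using measure_eq_zero_iff_ae_notMem.1 (hnull (1 / (n + 1)) Nat.one_div_pos_of_nat)
  have hzero : (id : ℝ → ℝ) =ᵐ[μ] fun _ ↦ 0 := by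
    filter_upwards [hμ₀, hsmall] with s hs hn
    refine le_antisymm (le_of_forall_pos_lt_add fun ε hε ↦ ?_) hs
    obtain ⟨n, hn'⟩ := exists_nat_one_div_lt hε
    simpa using (hn n).trans hn'
  exact hμ (by simpa using (ProbabilityTheory.hasLaw_dirac_of_ae_eq hzero).map_eq)

lemma psiR_neg_ofReal (μ : Measure ℝ) (x : ℝ) :
    psiR μ (-x) = -↑(∫ s, x * s / (1 + x * s) ∂μ) := by
  rw [psiR, ← integral_complex_ofReal, ← integral_neg]
  congr 1 with s
  push_cast
  ring

lemma integral_one_add_mul_div_sub_neg_ofReal (ρ : Measure ℝ) (x : ℝ) :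
    ∫ s : ℝ, (1 + -x * (s : ℂ)) / (-x - s) ∂ρ = ↑(∫ s, (x * s - 1) / (x + s) ∂ρ) := by
  rw [← integral_complex_ofReal]
  congr 1 with s
  push_cast
  rw [← neg_div_neg_eq]
  ring_nf

lemma nonpos_of_eventually_exp_mul_le_mul {b C : ℝ}
    (h : ∀ᶠ x in atTop, Real.exp (b * x) ≤ C * x) : b ≤ 0 := by
  by_contra! hb
  have hbig := (tendsto_exp_mul_div_rpow_atTop 1 b hb).eventually_gt_atTop C
  obtain ⟨x, hx, hxC, hx₀⟩ := (h.and (hbig.and (eventually_gt_atTop 0))).exists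
  rw [Real.rpow_one, lt_div_iff₀ hx₀] at hxC
  linarith

section NegativeAxis

variable {μ : Measure ℝ} {x : ℝ}

lemma integrable_mul_div_one_add_mul [IsFiniteMeasure μ] (hμ₀ : ∀ᵐ s ∂μ, 0 ≤ s) (hx : 0 ≤ x) :
    Integrable (fun s ↦ x * s / (1 + x * s)) μ := by
  refine Integrable.of_bound (Measurable.aestronglyMeasurable (by fun_prop)) 1 ?_
  filter_upwards [hμ₀] with s hs
  have hxs : 0 ≤ x * s := mul_nonneg hx hs
  rw [Real.norm_of_nonneg (by positivity), div_le_one (by positivity)]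
  linarith

lemma integral_mul_div_one_add_mul_le_one [IsProbabilityMeasure μ] (hμ₀ : ∀ᵐ s ∂μ, 0 ≤ s)
    (hx : 0 ≤ x) : ∫ s, x * s / (1 + x * s) ∂μ ≤ 1 := by
  refine (integral_mono_ae (integrable_mul_div_one_add_mul hμ₀ hx) (integrable_const 1) ?_).trans
    (by simp)
  filter_upwards [hμ₀] with s hs
  have hxs : 0 ≤ x * s := mul_nonneg hx hs
  rw [div_le_one (by positivity)]
  linarith

lemma half_measureReal_Ici_le_integral [IsFiniteMeasure μ] (hμ₀ : ∀ᵐ s ∂μ, 0 ≤ s) {ε : ℝ}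
    (hε : 0 < ε) (hx : ε⁻¹ ≤ x) :
    μ.real (Set.Ici ε) / 2 ≤ ∫ s, x * s / (1 + x * s) ∂μ := by
  have hx₀ : 0 ≤ x := (inv_pos.2 hε).le.trans hx
  calc μ.real (Set.Ici ε) / 2 = ∫ s, (Set.Ici ε).indicator (fun _ ↦ (1 / 2 : ℝ)) s ∂μ := by
        rw [integral_indicator_const _ measurableSet_Ici, smul_eq_mul]; ring
    _ ≤ ∫ s, x * s / (1 + x * s) ∂μ := by
      refine integral_mono_ae ((integrable_const _).indicator measurableSet_Ici)
        (integrable_mul_div_one_add_mul hμ₀ hx₀) ?_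
      filter_upwards [hμ₀] with s hs
      by_cases hsε : s ∈ Set.Ici ε
      · have hxs : 1 ≤ x * s := by
          calc 1 = ε⁻¹ * ε := (inv_mul_cancel₀ hε.ne').symm
            _ ≤ x * s := mul_le_mul hx hsε hε.le hx₀
        rw [Set.indicator_of_mem hsε, le_div_iff₀ (by positivity)]
        linarith
      · rw [Set.indicator_of_notMem hsε]
        positivity

lemma norm_neg_div_etaR_le [IsProbabilityMeasure μ] (hμ₀ : ∀ᵐ s ∂μ, 0 ≤ s) {ε : ℝ}
    (hε : 0 < ε) (hμε : μ (Set.Ici ε) ≠ 0) (hx : ε⁻¹ ≤ x) :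
    ‖(-x : ℂ) / etaR μ (-x)‖ ≤ 2 * x / μ.real (Set.Ici ε) := by
  set P := ∫ s, x * s / (1 + x * s) ∂μ with hPdef
  have hx₀ : 0 < x := (inv_pos.2 hε).trans_le hx
  have hδ : 0 < μ.real (Set.Ici ε) := ENNReal.toReal_pos hμε (measure_ne_top μ _)
  have hP_le_one : P ≤ 1 := integral_mul_div_one_add_mul_le_one hμ₀ hx₀.le
  have hP_ge : μ.real (Set.Ici ε) / 2 ≤ P := half_measureReal_Ici_le_integral hμ₀ hε hx
  have hquot : (-x : ℂ) / etaR μ (-x) = ↑(x * (1 - P) / P) := by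
    rw [etaR, psiR_neg_ofReal, ← hPdef]
    push_cast
    rw [div_div_eq_mul_div]
    ring
  have hP_pos : 0 < P := (half_pos hδ).trans_le hP_ge
  rw [hquot, Complex.norm_real, Real.norm_of_nonneg (by positivity)]
  calc x * (1 - P) / P ≤ x / (μ.real (Set.Ici ε) / 2) :=
        div_le_div₀ hx₀.le (by nlinarith) (by positivity) hP_ge
    _ = 2 * x / μ.real (Set.Ici ε) := by field_simp

end NegativeAxis

section NegativeAxisIntegral

variable {ρ : Measure ℝ} {x : ℝ}

lemma integrable_mul_sub_one_div_add [IsFiniteMeasure ρ] (hρ₀ : ∀ᵐ s ∂ρ, 0 ≤ s) (hx : 1 ≤ x) :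
    Integrable (fun s ↦ (x * s - 1) / (x + s)) ρ := by
  refine Integrable.of_bound (Measurable.aestronglyMeasurable (by fun_prop)) x ?_
  filter_upwards [hρ₀] with s hs
  have hxs : 0 < x + s := by linarith
  rw [Real.norm_eq_abs, abs_div, abs_of_pos hxs, div_le_iff₀ hxs, abs_le]
  constructor <;> nlinarith

lemma neg_measureReal_univ_le_integral_mul_sub_one_div_add [IsFiniteMeasure ρ]
    (hρ₀ : ∀ᵐ s ∂ρ, 0 ≤ s) (hx : 1 ≤ x) : -ρ.real Set.univ ≤ ∫ s, (x * s - 1) / (x + s) ∂ρ := by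
  refine le_of_eq_of_le (by simp) (integral_mono_ae (integrable_const (-1 : ℝ))
    (integrable_mul_sub_one_div_add hρ₀ hx) ?_)
  filter_upwards [hρ₀] with s hs
  rw [le_div_iff₀ (by linarith)]
  nlinarith

lemma exp_sub_measureReal_univ_le_norm_exp [IsFiniteMeasure ρ] (hρ₀ : ∀ᵐ s ∂ρ, 0 ≤ s)
    (a b : ℝ) (hx : 1 ≤ x) :
    Real.exp (a + b * x - ρ.real Set.univ) ≤
      ‖Complex.exp (a - b * (-x : ℂ) + ∫ s : ℝ, (1 + -x * (s : ℂ)) / (-x - s) ∂ρ)‖ := by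
  rw [integral_one_add_mul_div_sub_neg_ofReal, Complex.norm_exp]
  norm_cast
  gcongr
  linarith [neg_measureReal_univ_le_integral_mul_sub_one_div_add hρ₀ hx]

end NegativeAxisIntegral

theorem stmt7 (μ : Measure ℝ) [IsProbabilityMeasure μ]
    (hsupp : μ (Set.Iio 0) = 0) (hμ : μ ≠ Measure.dirac 0)
    (ρ : Measure ℝ) [IsFiniteMeasure ρ] (hρ : ρ (Set.Iio 0) = 0)
    (a b : ℝ) (hb : 0 ≤ b)
    (h : ∀ z ∈ OmegaR, z / etaR μ z =
      Complex.exp ((a : ℂ) - (b : ℂ) * z + ∫ s : ℝ, (1 + z * (s : ℂ)) / (z - (s : ℂ)) ∂ρ)) :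
    b = 0 := by
  have hμ₀ : ∀ᵐ s ∂μ, 0 ≤ s := (measure_eq_zero_iff_ae_notMem.1 hsupp).mono fun _ hs ↦ not_lt.1 hs
  have hρ₀ : ∀ᵐ s ∂ρ, 0 ≤ s := (measure_eq_zero_iff_ae_notMem.1 hρ).mono fun _ hs ↦ not_lt.1 hs
  obtain ⟨ε, hε, hμε⟩ := exists_pos_measure_Ici_ne_zero hμ₀ hμ
  set R := ρ.real Set.univ
  set δ := μ.real (Set.Ici ε)
  refine le_antisymm (nonpos_of_eventually_exp_mul_le_mul (C := 2 * Real.exp (R - a) / δ) ?_) hb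
  filter_upwards [eventually_ge_atTop 1, eventually_ge_atTop ε⁻¹] with x hx₁ hxε
  have hz : (-x : ℂ) ∈ OmegaR := by
    simp only [OmegaR, Set.mem_ofPred_eq, Complex.neg_re, Complex.ofReal_re]
    intro h'
    linarith [h'.2]
  have hgrowth : Real.exp (a + b * x - R) ≤ 2 * x / δ :=
    (exp_sub_measureReal_univ_le_norm_exp hρ₀ a b hx₁).trans
      (h _ hz ▸ norm_neg_div_etaR_le hμ₀ hε hμε hxε)
  calc Real.exp (b * x) = Real.exp (a + b * x - R) * Real.exp (R - a) := by
        rw [← Real.exp_add]; ring_nf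
    _ ≤ 2 * x / δ * Real.exp (R - a) := by gcongr
    _ = 2 * Real.exp (R - a) / δ * x := by ring
end

section
/- Let ρ be a finite positive Borel measure on [0,∞) and fix r > 0. Define g(r,θ) = (r·sin θ / θ) · ∫_{[0,∞)} (s²+1)/(r² − 2rs·cos θ + s²) dρ(s) for θ ∈ (0,π). Then θ ↦ g(r,θ) is nonincreasing on (0,π) (strictly decreasing if ρ ≠ 0), and g(r,θ) → 0 as θ → π from the left. -/
open MeasureTheory Filter

lemma denom_eq (r θ s : ℝ) :
    r ^ 2 - 2 * r * s * Real.cos θ + s ^ 2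
      = (s - r * Real.cos θ) ^ 2 + (r * Real.sin θ) ^ 2 := by
  linear_combination (-(r^2)) * Real.sin_sq_add_cos_sq θ

lemma denom_pos {r θ : ℝ} (hr : 0 < r) (h1 : 0 < θ) (h2 : θ < Real.pi) (s : ℝ) :
    0 < r ^ 2 - 2 * r * s * Real.cos θ + s ^ 2 := by
  rw [denom_eq]
  have hs : 0 < Real.sin θ := Real.sin_pos_of_pos_of_lt_pi h1 h2
  positivity

lemma integrable_integrand (ρ : Measure ℝ) [IsFiniteMeasure ρ] {r θ : ℝ}
    (hr : 0 < r) (h1 : 0 < θ) (h2 : θ < Real.pi) :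
    Integrable (fun s => (s ^ 2 + 1) / (r ^ 2 - 2 * r * s * Real.cos θ + s ^ 2)) ρ := by
  have hs : 0 < Real.sin θ := Real.sin_pos_of_pos_of_lt_pi h1 h2
  have hbpos : 0 < r * Real.sin θ := mul_pos hr hs
  have hmeas : Continuous (fun s : ℝ => (s ^ 2 + 1) / (r ^ 2 - 2 * r * s * Real.cos θ + s ^ 2)) := by
    apply Continuous.div (by fun_prop) (by fun_prop)
    exact fun s => (denom_pos hr h1 h2 s).ne'
  refine (integrable_const (2 + (2 * (r * Real.cos θ) ^ 2 + 1) / (r * Real.sin θ) ^ 2)).mono' hmeas.aestronglyMeasurable ?_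
  filter_upwards with s
  have hD : 0 < r ^ 2 - 2 * r * s * Real.cos θ + s ^ 2 := denom_pos hr h1 h2 s
  rw [Real.norm_eq_abs, abs_of_nonneg (by positivity), div_le_iff₀ hD, denom_eq]
  have hd0 : 0 ≤ (2 * (r * Real.cos θ) ^ 2 + 1) / (r * Real.sin θ) ^ 2 := by positivity
  have hd : (2 * (r * Real.cos θ) ^ 2 + 1) / (r * Real.sin θ) ^ 2 * (r * Real.sin θ) ^ 2
      = 2 * (r * Real.cos θ) ^ 2 + 1 := div_mul_cancel₀ _ (by positivity)
  nlinarith [sq_nonneg (s - 2 * (r * Real.cos θ)),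
    mul_nonneg hd0 (sq_nonneg (s - r * Real.cos θ)), sq_nonneg (r * Real.sin θ)]

lemma sinc_strictAnti : StrictAntiOn (fun θ => Real.sin θ / θ) (Set.Ioo 0 Real.pi) := by
  apply strictAntiOn_of_deriv_neg (convex_Ioo 0 Real.pi)
  · apply ContinuousOn.div Real.continuous_sin.continuousOn continuousOn_id
    exact fun x hx => hx.1.ne'
  · intro x hx
    rw [interior_Ioo] at hx
    obtain ⟨hx1, hx2⟩ := hx
    have hx0 : x ≠ 0 := hx1.ne'
    have hder : HasDerivAt (fun θ => Real.sin θ / θ)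
        ((Real.cos x * x - Real.sin x * 1) / x ^ 2) x :=
      (Real.hasDerivAt_sin x).div (hasDerivAt_id x) hx0
    rw [hder.deriv]
    apply div_neg_of_neg_of_pos _ (by positivity)
    have hsin : 0 < Real.sin x := Real.sin_pos_of_pos_of_lt_pi hx1 hx2
    rcases lt_or_ge x (Real.pi / 2) with h | h
    · have hcos : 0 < Real.cos x := Real.cos_pos_of_mem_Ioo ⟨by linarith [Real.pi_pos], h⟩
      have ht : x < Real.tan x := Real.lt_tan hx1 h
      rw [Real.tan_eq_sin_div_cos] at ht
      have := (lt_div_iff₀ hcos).mp ht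
      nlinarith
    · have hcos : Real.cos x ≤ 0 := Real.cos_nonpos_of_pi_div_two_le_of_le h (by linarith)
      nlinarith

/-- g(r,θ) = (r·sin θ / θ) · ∫ (s²+1)/(r² − 2rs·cos θ + s²) dρ(s). -/
noncomputable def gpolar (ρ : Measure ℝ) (r θ : ℝ) : ℝ :=
  (r * Real.sin θ / θ) * ∫ s : ℝ, (s ^ 2 + 1) / (r ^ 2 - 2 * r * s * Real.cos θ + s ^ 2) ∂ρ

theorem stmt8 (ρ : Measure ℝ) [IsFiniteMeasure ρ] (hρ : ρ (Set.Iio 0) = 0)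
    (r : ℝ) (hr : 0 < r) :
    AntitoneOn (gpolar ρ r) (Set.Ioo 0 Real.pi) ∧
    (ρ ≠ 0 → StrictAntiOn (gpolar ρ r) (Set.Ioo 0 Real.pi)) ∧
    Tendsto (gpolar ρ r) (nhdsWithin Real.pi (Set.Iio Real.pi)) (nhds 0) := by
  have hpi := Real.pi_pos
  set I : ℝ → ℝ := fun θ => ∫ s : ℝ, (s ^ 2 + 1) / (r ^ 2 - 2 * r * s * Real.cos θ + s ^ 2) ∂ρ
    with hIdef
  have hg : ∀ θ, gpolar ρ r θ = r * Real.sin θ / θ * I θ := fun θ => rfl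
  have hae : ∀ᵐ s ∂ρ, 0 ≤ s := by
    rw [ae_iff]
    convert hρ using 2
    ext s; simp [not_le, Set.mem_Iio]
  have hInt : ∀ θ ∈ Set.Ioo 0 Real.pi,
      Integrable (fun s => (s ^ 2 + 1) / (r ^ 2 - 2 * r * s * Real.cos θ + s ^ 2)) ρ :=
    fun θ hθ => integrable_integrand ρ hr hθ.1 hθ.2
  have hI_nonneg : ∀ θ ∈ Set.Ioo 0 Real.pi, 0 ≤ I θ := by
    intro θ hθ
    apply integral_nonneg
    intro s
    exact le_of_lt (div_pos (by positivity) (denom_pos hr hθ.1 hθ.2 s))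
  have hI_mono : ∀ θ₁ ∈ Set.Ioo 0 Real.pi, ∀ θ₂ ∈ Set.Ioo 0 Real.pi, θ₁ ≤ θ₂ → I θ₂ ≤ I θ₁ := by
    intro θ₁ h₁ θ₂ h₂ h12
    apply integral_mono_ae (hInt θ₂ h₂) (hInt θ₁ h₁)
    filter_upwards [hae] with s hs
    have hcos : Real.cos θ₂ ≤ Real.cos θ₁ :=
      Real.strictAntiOn_cos.antitoneOn ⟨h₁.1.le, h₁.2.le⟩ ⟨h₂.1.le, h₂.2.le⟩ h12
    have hmul : 2 * r * s * Real.cos θ₂ ≤ 2 * r * s * Real.cos θ₁ :=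
      mul_le_mul_of_nonneg_left hcos (by positivity)
    have hden : r ^ 2 - 2 * r * s * Real.cos θ₁ + s ^ 2
        ≤ r ^ 2 - 2 * r * s * Real.cos θ₂ + s ^ 2 := by linarith
    exact div_le_div_of_nonneg_left (by positivity) (denom_pos hr h₁.1 h₁.2 s) hden
  have hsinpos : ∀ θ ∈ Set.Ioo 0 Real.pi, 0 < Real.sin θ :=
    fun θ hθ => Real.sin_pos_of_pos_of_lt_pi hθ.1 hθ.2
  have hhpos : ∀ θ ∈ Set.Ioo 0 Real.pi, 0 < r * Real.sin θ / θ :=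
    fun θ hθ => div_pos (mul_pos hr (hsinpos θ hθ)) hθ.1
  have hh_anti : ∀ θ₁ ∈ Set.Ioo 0 Real.pi, ∀ θ₂ ∈ Set.Ioo 0 Real.pi, θ₁ ≤ θ₂ →
      r * Real.sin θ₂ / θ₂ ≤ r * Real.sin θ₁ / θ₁ := by
    intro θ₁ h₁ θ₂ h₂ h12
    have := sinc_strictAnti.antitoneOn h₁ h₂ h12
    rw [mul_div_assoc, mul_div_assoc]
    exact mul_le_mul_of_nonneg_left this hr.le
  have hh_strict : ∀ θ₁ ∈ Set.Ioo 0 Real.pi, ∀ θ₂ ∈ Set.Ioo 0 Real.pi, θ₁ < θ₂ →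
      r * Real.sin θ₂ / θ₂ < r * Real.sin θ₁ / θ₁ := by
    intro θ₁ h₁ θ₂ h₂ h12
    have := sinc_strictAnti h₁ h₂ h12
    rw [mul_div_assoc, mul_div_assoc]
    exact mul_lt_mul_of_pos_left this hr
  refine ⟨?_, ?_, ?_⟩
  · -- AntitoneOn
    intro θ₁ h₁ θ₂ h₂ h12
    rw [hg, hg]
    exact mul_le_mul (hh_anti θ₁ h₁ θ₂ h₂ h12) (hI_mono θ₁ h₁ θ₂ h₂ h12)
      (hI_nonneg θ₂ h₂) (hhpos θ₁ h₁).le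
  · -- StrictAntiOn
    intro hne θ₁ h₁ θ₂ h₂ h12
    rw [hg, hg]
    have hI2pos : 0 < I θ₂ := by
      rw [hIdef]
      rw [integral_pos_iff_support_of_nonneg_ae ?_ (hInt θ₂ h₂)]
      · have hsupp : Function.support
            (fun s => (s ^ 2 + 1) / (r ^ 2 - 2 * r * s * Real.cos θ₂ + s ^ 2)) = Set.univ :=
          Set.eq_univ_of_forall fun s =>
            (div_pos (by positivity) (denom_pos hr h₂.1 h₂.2 s)).ne'
        rw [hsupp]
        exact Measure.measure_univ_pos.mpr hne
      · filter_upwards with s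
        exact le_of_lt (div_pos (by positivity) (denom_pos hr h₂.1 h₂.2 s))
    calc r * Real.sin θ₂ / θ₂ * I θ₂ < r * Real.sin θ₁ / θ₁ * I θ₂ :=
          mul_lt_mul_of_pos_right (hh_strict θ₁ h₁ θ₂ h₂ h12) hI2pos
      _ ≤ r * Real.sin θ₁ / θ₁ * I θ₁ :=
          mul_le_mul_of_nonneg_left (hI_mono θ₁ h₁ θ₂ h₂ h12.le) (hhpos θ₁ h₁).le
  · -- Tendsto
    set M : ℝ := max 1 (1 / r ^ 2) with hM
    have hM1 : 1 ≤ M := le_max_left _ _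
    have hMr : 1 ≤ M * r ^ 2 := by
      have h1 : 1 / r ^ 2 ≤ M := le_max_right _ _
      calc (1:ℝ) = 1 / r ^ 2 * r ^ 2 := (div_mul_cancel₀ _ (by positivity)).symm
        _ ≤ M * r ^ 2 := mul_le_mul_of_nonneg_right h1 (by positivity)
    set C : ℝ := (ρ Set.univ).toReal * M with hC
    have hbound : ∀ θ ∈ Set.Ioo (Real.pi / 2) Real.pi,
        gpolar ρ r θ ≤ r * Real.sin θ / θ * C := by
      intro θ hθ
      have hθ' : θ ∈ Set.Ioo 0 Real.pi := ⟨by linarith [hθ.1], hθ.2⟩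
      have hIθ : I θ ≤ C := by
        have hle : I θ ≤ ∫ _ : ℝ, M ∂ρ := by
          apply integral_mono_ae (hInt θ hθ') (integrable_const M)
          filter_upwards [hae] with s hs
          have hD := denom_pos hr hθ'.1 hθ'.2 s
          rw [div_le_iff₀ hD]
          have hcos : Real.cos θ ≤ 0 :=
            Real.cos_nonpos_of_pi_div_two_le_of_le hθ.1.le (by linarith [hθ.2, hpi])
          have h2 : 2 * r * s * Real.cos θ ≤ 0 :=
            mul_nonpos_of_nonneg_of_nonpos (by positivity) hcos
          have hM0 : (0:ℝ) ≤ M := by linarith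
          nlinarith [mul_nonneg hM0 (neg_nonneg.mpr h2),
            mul_nonneg (sub_nonneg.mpr hM1) (sq_nonneg s)]
        rwa [integral_const, smul_eq_mul] at hle
      rw [hg]
      exact mul_le_mul_of_nonneg_left hIθ (hhpos θ hθ').le
    have hlb : ∀ θ ∈ Set.Ioo (Real.pi / 2) Real.pi, 0 ≤ gpolar ρ r θ := by
      intro θ hθ
      have hθ' : θ ∈ Set.Ioo 0 Real.pi := ⟨by linarith [hθ.1], hθ.2⟩
      rw [hg]
      exact mul_nonneg (hhpos θ hθ').le (hI_nonneg θ hθ')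
    have hev : ∀ᶠ θ in nhdsWithin Real.pi (Set.Iio Real.pi), θ ∈ Set.Ioo (Real.pi / 2) Real.pi := by
      have h1 : ∀ᶠ θ in nhdsWithin Real.pi (Set.Iio Real.pi), Real.pi / 2 < θ :=
        (eventually_gt_nhds (by linarith)).filter_mono nhdsWithin_le_nhds
      filter_upwards [h1, self_mem_nhdsWithin] with θ ha hb using ⟨ha, hb⟩
    have htend : Tendsto (fun θ => r * Real.sin θ / θ * C)
        (nhdsWithin Real.pi (Set.Iio Real.pi)) (nhds 0) := by
      have hc : ContinuousAt (fun θ => r * Real.sin θ / θ * C) Real.pi := by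
        apply ContinuousAt.mul _ continuousAt_const
        exact (continuousAt_const.mul Real.continuous_sin.continuousAt).div continuousAt_id
          hpi.ne'
      have h2 : Tendsto (fun θ => r * Real.sin θ / θ * C)
          (nhdsWithin Real.pi (Set.Iio Real.pi)) (nhds (r * Real.sin Real.pi / Real.pi * C)) :=
        hc.tendsto.mono_left nhdsWithin_le_nhds
      simpa [Real.sin_pi] using h2
    apply tendsto_of_tendsto_of_tendsto_of_le_of_le' tendsto_const_nhds htend
    · filter_upwards [hev] with θ hθ using hlb θ hθ
    · filter_upwards [hev] with θ hθ using hbound θ hθ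
end

section
/- Let ρ be a finite positive Borel measure on [0,∞), a ∈ ℝ, and u(z) = a + ∫_{[0,∞)} (1+zs)/(z−s) dρ(s) for z in the upper half-plane. Let t > 1. Then: (i) for every r > 0 the set {θ ∈ (0,π) : −Im u(re^{iθ})/θ < 1/(t−1)} is nonempty, and its infimum A_t(r) satisfies 0 ≤ A_t(r) < π; (ii) V_t^+ := {r > 0 : g(r) > 1/(t−1)} equals {r > 0 : A_t(r) > 0}, where g(r) = ∫_{[0,∞)} r(s²+1)/(r−s)² dρ(s) ∈ [0,∞]; (iii) for every r ∈ V_t^+ one has Im u(r·e^{iA_t(r)}) = −A_t(r)/(t−1). -/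
open MeasureTheory Filter ENNReal

/-- u(z) = a + ∫ (1+zs)/(z−s) dρ(s). -/
noncomputable def ufun (ρ : Measure ℝ) (a : ℝ) (z : ℂ) : ℂ :=
  (a : ℂ) + ∫ s : ℝ, (1 + z * (s : ℂ)) / (z - (s : ℂ)) ∂ρ

/-- A_t(r) = inf{θ ∈ (0,π) : −Im u(re^{iθ})/θ < 1/(t−1)}. -/
noncomputable def At (ρ : Measure ℝ) (a t r : ℝ) : ℝ :=
  sInf {θ : ℝ | θ ∈ Set.Ioo 0 Real.pi ∧
    -(ufun ρ a ((r : ℂ) * Complex.exp ((θ : ℂ) * Complex.I))).im / θ < 1 / (t - 1)}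

/-- g(r) = ∫ r(s²+1)/(r−s)² dρ(s), with values in [0,∞]. -/
noncomputable def gfun (ρ : Measure ℝ) (r : ℝ) : ℝ≥0∞ :=
  ∫⁻ s : ℝ, ENNReal.ofReal (r * (s ^ 2 + 1)) / ENNReal.ofReal ((r - s) ^ 2) ∂ρ

/-!
For `z` in the upper half-plane, `-Im u(z) = Im z · ∫ (s² + 1) / |z - s|² dρ(s)`, so at `z = r e^{iθ}`
the ratio `-Im u(z) / θ` is `r · sinc θ` times a Poisson-type integral. For `s ≥ 0` one has
`|r e^{iθ} - s| ≥ |r - s|`, and `sinc θ < 1` on `(0, π)`, so the ratio stays strictly below `g(r)`;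
conversely Fatou's lemma gives `g(r) ≤ liminf` of the ratio as `θ → 0⁺`. Hence the sublevel set
`{θ ∈ (0, π) : ratio < 1/(t-1)}` is all of `(0, π)` when `g(r) ≤ 1/(t-1)`, and otherwise stays away
from `0`. Near `θ = π` the ratio tends to `0`, so the set is nonempty, and since `u` is continuous the
ratio equals `1/(t-1)` at a positive infimum.
-/

open Set Topology Real

lemma apply_csInf_sublevel_eq {f : ℝ → ℝ} {a b c : ℝ} (hf : ContinuousOn f (Ioo a b))
    (hne : {x | x ∈ Ioo a b ∧ f x < c}.Nonempty) (ha : a < sInf {x | x ∈ Ioo a b ∧ f x < c}) :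
    f (sInf {x | x ∈ Ioo a b ∧ f x < c}) = c := by
  set S := {x | x ∈ Ioo a b ∧ f x < c}
  have hbdd : BddBelow S := ⟨a, fun x hx => hx.1.1.le⟩
  obtain ⟨x, hx⟩ := hne
  have hA : sInf S ∈ Ioo a b := ⟨ha, (csInf_le hbdd hx).trans_lt hx.1.2⟩
  have hcont : ContinuousAt f (sInf S) := hf.continuousAt (Ioo_mem_nhds hA.1 hA.2)
  refine le_antisymm ?_ ?_
  · exact hcont.continuousWithinAt.closure_le (csInf_mem_closure ⟨x, hx⟩ hbdd)
      continuousWithinAt_const fun y hy => hy.2.le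
  · refine continuousWithinAt_const.closure_le (s := Ioo a (sInf S)) ?_ hcont.continuousWithinAt
      fun y hy => not_lt.1 fun hlt => notMem_of_lt_csInf hy.2 hbdd ⟨⟨hy.1, hy.2.trans hA.2⟩, hlt⟩
    rw [closure_Ioo ha.ne]
    exact right_mem_Icc.2 ha.le

section Kernel

variable {z : ℂ}

lemma sub_ofReal_ne_zero (hz : 0 < z.im) (s : ℝ) : z - s ≠ 0 := fun h =>
  hz.ne' (by simpa using congrArg Complex.im h)

lemma continuous_kernel (hz : 0 < z.im) :
    Continuous fun s : ℝ => (1 + z * s) / (z - s) :=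
  (by fun_prop : Continuous fun s : ℝ => 1 + z * s).div (by fun_prop) (sub_ofReal_ne_zero hz)

lemma norm_kernel_le (hz : 0 < z.im) (s : ℝ) :
    ‖(1 + z * s) / (z - s)‖ ≤ ‖1 + z ^ 2‖ / z.im + ‖z‖ := by
  have hne := sub_ofReal_ne_zero hz s
  have hsplit : (1 + z * s) / (z - s) = (1 + z ^ 2) / (z - s) - z := by
    field_simp
    ring
  rw [hsplit]
  refine (norm_sub_le _ _).trans (add_le_add_left ?_ _)
  rw [norm_div]
  gcongr
  simpa using Complex.im_le_norm (z - s)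

lemma im_kernel (hz : 0 < z.im) (s : ℝ) :
    ((1 + z * s) / (z - s)).im = -(z.im * ((s ^ 2 + 1) / Complex.normSq (z - s))) := by
  have hne : Complex.normSq (z - s) ≠ 0 := by simpa using sub_ofReal_ne_zero hz s
  rw [Complex.div_im]
  simp only [Complex.normSq_apply, Complex.add_re, Complex.add_im, Complex.sub_re, Complex.sub_im,
    Complex.mul_re, Complex.mul_im, Complex.one_re, Complex.one_im, Complex.ofReal_re,
    Complex.ofReal_im] at hne ⊢
  field_simp
  ring

end Kernel

section Integral

variable (ρ : Measure ℝ) [IsFiniteMeasure ρ] (a : ℝ) {z : ℂ}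

lemma integrable_kernel (hz : 0 < z.im) :
    Integrable (fun s : ℝ => (1 + z * s) / (z - s)) ρ :=
  .of_bound (continuous_kernel hz).aestronglyMeasurable _ (ae_of_all _ (norm_kernel_le hz))

lemma continuousOn_ufun : ContinuousOn (ufun ρ a) {z | 0 < z.im} := by
  intro z₀ hz₀
  have hopen : {z : ℂ | 0 < z.im} ∈ 𝓝 z₀ :=
    (isOpen_lt continuous_const Complex.continuous_im).mem_nhds hz₀
  set B : ℂ → ℝ := fun z => ‖1 + z ^ 2‖ / z.im + ‖z‖
  have hB : ContinuousAt B z₀ :=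
    ((by fun_prop : Continuous fun z : ℂ => ‖1 + z ^ 2‖).continuousAt.div
      Complex.continuous_im.continuousAt hz₀.ne').add continuous_norm.continuousAt
  have hbound : ∀ᶠ z in 𝓝 z₀, 0 < z.im ∧ B z < B z₀ + 1 :=
    (show ∀ᶠ z in 𝓝 z₀, 0 < z.im from hopen).and (hB.eventually (gt_mem_nhds (lt_add_one _)))
  refine (continuousAt_const.add (continuousAt_of_dominated (bound := fun _ => B z₀ + 1) ?_ ?_
    (integrable_const _) (ae_of_all _ fun s => ?_))).continuousWithinAt
  · filter_upwards [hopen] with z hz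
    exact (continuous_kernel hz).aestronglyMeasurable
  · filter_upwards [hbound] with z hz
    exact ae_of_all _ fun s => (norm_kernel_le hz.1 s).trans hz.2.le
  · exact (by fun_prop : Continuous fun z : ℂ => 1 + z * s).continuousAt.div
      (by fun_prop) (sub_ofReal_ne_zero hz₀ s)

lemma neg_im_ufun (hz : 0 < z.im) :
    -(ufun ρ a z).im = ∫ s, z.im * ((s ^ 2 + 1) / Complex.normSq (z - s)) ∂ρ := by
  have h := integral_im (integrable_kernel ρ hz)
  simp only [RCLike.im_to_complex] at h
  rw [ufun, Complex.add_im, Complex.ofReal_im, zero_add, ← h, ← integral_neg]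
  simp only [im_kernel hz, neg_neg]

end Integral

section PoissonWeight

-- Valued in `ℝ≥0∞`, so that it is `⊤` at a real `z = s`, as the integrand of `gfun` is at `s = r`.
noncomputable def poissonWeight (z : ℂ) (s : ℝ) : ℝ≥0∞ :=
  ENNReal.ofReal (s ^ 2 + 1) / ENNReal.ofReal (Complex.normSq (z - s))

lemma measurable_poissonWeight (z : ℂ) : Measurable (poissonWeight z) := by
  unfold poissonWeight
  fun_prop

lemma continuous_poissonWeight_left (s : ℝ) : Continuous fun z => poissonWeight z s :=
  continuous_iff_continuousAt.2 fun z =>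
    ENNReal.Tendsto.div tendsto_const_nhds (Or.inl (ENNReal.ofReal_pos.2 (by positivity)).ne')
      ((ENNReal.continuous_ofReal.comp (by fun_prop)).tendsto z) (Or.inr ofReal_ne_top)

lemma poissonWeight_le_norm {s : ℝ} (hs : 0 ≤ s) (z : ℂ) :
    poissonWeight z s ≤ poissonWeight ‖z‖ s := by
  refine ENNReal.div_le_div_left (ENNReal.ofReal_le_ofReal ?_) _
  rw [← Complex.ofReal_sub, Complex.normSq_ofReal, ← sq, Complex.normSq_eq_norm_sq, sq_le_sq,
    abs_norm]
  simpa [abs_of_nonneg hs] using abs_norm_sub_norm_le z s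

lemma poissonWeight_le_of_re_nonpos {z : ℂ} {s : ℝ} (hz : z ≠ 0) (hre : z.re ≤ 0) (hs : 0 ≤ s) :
    poissonWeight z s ≤ ENNReal.ofReal (1 + ‖z‖⁻¹ ^ 2) := by
  have hR : ‖z‖⁻¹ ^ 2 * ‖z‖ ^ 2 = 1 := by
    rw [← mul_pow, inv_mul_cancel₀ (norm_ne_zero_iff.2 hz), one_pow]
  have hN : ‖z‖ ^ 2 + s ^ 2 ≤ Complex.normSq (z - s) := by
    rw [Complex.sq_norm, Complex.normSq_apply, Complex.normSq_apply]
    simp only [Complex.sub_re, Complex.ofReal_re, Complex.sub_im, Complex.ofReal_im, sub_zero]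
    nlinarith [mul_nonneg hs (neg_nonneg.2 hre)]
  refine ENNReal.div_le_of_le_mul ?_
  rw [← ENNReal.ofReal_mul (by positivity)]
  refine ENNReal.ofReal_le_ofReal ?_
  calc s ^ 2 + 1 ≤ (1 + ‖z‖⁻¹ ^ 2) * (‖z‖ ^ 2 + s ^ 2) := by
        nlinarith [mul_nonneg (sq_nonneg ‖z‖⁻¹) (sq_nonneg s)]
    _ ≤ (1 + ‖z‖⁻¹ ^ 2) * Complex.normSq (z - s) := by gcongr

lemma gfun_eq_lintegral_poissonWeight (ρ : Measure ℝ) {r : ℝ} (hr : 0 ≤ r) :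
    gfun ρ r = ∫⁻ s, ENNReal.ofReal r * poissonWeight r s ∂ρ :=
  lintegral_congr fun s => by
    rw [poissonWeight, ← Complex.ofReal_sub, Complex.normSq_ofReal, ← sq, ENNReal.ofReal_mul hr,
      mul_div_assoc]

lemma ofReal_neg_im_ufun (ρ : Measure ℝ) [IsFiniteMeasure ρ] (a : ℝ) {z : ℂ} (hz : 0 < z.im) :
    ENNReal.ofReal (-(ufun ρ a z).im) = ∫⁻ s, ENNReal.ofReal z.im * poissonWeight z s ∂ρ := by
  have hint : Integrable (fun s : ℝ => z.im * ((s ^ 2 + 1) / Complex.normSq (z - s))) ρ :=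
    (integrable_kernel ρ hz).im.neg.congr (ae_of_all _ fun s => by simp [im_kernel hz])
  rw [neg_im_ufun ρ a hz, ofReal_integral_eq_lintegral_ofReal hint
    (ae_of_all _ fun s => mul_nonneg hz.le (div_nonneg (by positivity) (Complex.normSq_nonneg _)))]
  refine lintegral_congr fun s => ?_
  rw [ENNReal.ofReal_mul hz.le,
    ENNReal.ofReal_div_of_pos (Complex.normSq_pos.2 (sub_ofReal_ne_zero hz s)), poissonWeight]

end PoissonWeight

section Polar

variable {r θ : ℝ}

lemma re_ofReal_mul_exp (r θ : ℝ) : ((r : ℂ) * Complex.exp (θ * Complex.I)).re = r * cos θ := by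
  rw [Complex.re_ofReal_mul, Complex.exp_ofReal_mul_I_re]

lemma im_ofReal_mul_exp (r θ : ℝ) : ((r : ℂ) * Complex.exp (θ * Complex.I)).im = r * sin θ := by
  rw [Complex.im_ofReal_mul, Complex.exp_ofReal_mul_I_im]

lemma norm_ofReal_mul_exp (hr : 0 ≤ r) : ‖(r : ℂ) * Complex.exp (θ * Complex.I)‖ = r := by
  rw [norm_mul, Complex.norm_exp_ofReal_mul_I, mul_one, Complex.norm_of_nonneg hr]

lemma im_ofReal_mul_exp_pos (hr : 0 < r) (hθ : θ ∈ Ioo 0 π) :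
    0 < ((r : ℂ) * Complex.exp (θ * Complex.I)).im := by
  rw [im_ofReal_mul_exp]
  exact mul_pos hr (sin_pos_of_pos_of_lt_pi hθ.1 hθ.2)

end Polar

noncomputable def imRatio (ρ : Measure ℝ) (a r θ : ℝ) : ℝ :=
  -(ufun ρ a ((r : ℂ) * Complex.exp ((θ : ℂ) * Complex.I))).im / θ

section ImRatio

variable (ρ : Measure ℝ) [IsFiniteMeasure ρ] (a : ℝ) {r θ c : ℝ}

lemma continuousOn_imRatio (hr : 0 < r) : ContinuousOn (imRatio ρ a r) (Ioo 0 π) := by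
  have hmaps : MapsTo (fun θ : ℝ => (r : ℂ) * Complex.exp (θ * Complex.I)) (Ioo 0 π)
      {z | 0 < z.im} := fun θ hθ => im_ofReal_mul_exp_pos hr hθ
  exact (Complex.continuous_im.comp_continuousOn
    ((continuousOn_ufun ρ a).comp (by fun_prop) hmaps)).neg.div continuousOn_id
    fun θ hθ => hθ.1.ne'

-- The factor `r * sinc θ` (rather than `r * sin θ / θ`) keeps the integrand continuous at `θ = 0`.
lemma ofReal_imRatio (hr : 0 < r) (hθ : θ ∈ Ioo 0 π) :
    ENNReal.ofReal (imRatio ρ a r θ) = ∫⁻ s, ENNReal.ofReal (r * sinc θ) *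
      poissonWeight (r * Complex.exp (θ * Complex.I)) s ∂ρ := by
  rw [imRatio, div_eq_inv_mul, ENNReal.ofReal_mul (inv_nonneg.2 hθ.1.le),
    ofReal_neg_im_ufun ρ a (im_ofReal_mul_exp_pos hr hθ), ← lintegral_const_mul' _ _ ofReal_ne_top]
  refine lintegral_congr fun s => ?_
  rw [← mul_assoc, ← ENNReal.ofReal_mul (inv_nonneg.2 hθ.1.le), im_ofReal_mul_exp,
    sinc_of_ne_zero hθ.1.ne', inv_mul_eq_div, mul_div_assoc]

lemma imRatio_lt_of_gfun_le (hρ : ∀ᵐ s ∂ρ, 0 ≤ s) (hr : 0 < r) (hc : 0 < c)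
    (hg : gfun ρ r ≤ ENNReal.ofReal c) (hθ : θ ∈ Ioo 0 π) : imRatio ρ a r θ < c := by
  have hsinc : sinc θ < 1 := by
    rw [sinc_of_ne_zero hθ.1.ne', div_lt_one hθ.1]
    exact sin_lt hθ.1
  have hle : ENNReal.ofReal (imRatio ρ a r θ) ≤ ENNReal.ofReal (sinc θ * c) := calc
    ENNReal.ofReal (imRatio ρ a r θ)
        ≤ ∫⁻ s, ENNReal.ofReal (sinc θ) * (ENNReal.ofReal r * poissonWeight r s) ∂ρ := by
      rw [ofReal_imRatio ρ a hr hθ]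
      refine lintegral_mono_ae (hρ.mono fun s hs => ?_)
      have hw := poissonWeight_le_norm hs ((r : ℂ) * Complex.exp (θ * Complex.I))
      rw [norm_ofReal_mul_exp hr.le] at hw
      rw [ENNReal.ofReal_mul hr.le, mul_comm (ENNReal.ofReal r), mul_assoc]
      gcongr
    _ = ENNReal.ofReal (sinc θ) * gfun ρ r := by
      rw [lintegral_const_mul' _ _ ofReal_ne_top, gfun_eq_lintegral_poissonWeight ρ hr.le]
    _ ≤ ENNReal.ofReal (sinc θ * c) := by
      rw [ENNReal.ofReal_mul' hc.le]
      gcongr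
  rcases ENNReal.ofReal_le_ofReal_iff'.1 hle with h | h
  · exact h.trans_lt (mul_lt_of_lt_one_left hc hsinc)
  · exact h.trans_lt hc

end ImRatio

section ImRatioLimits

variable (ρ : Measure ℝ) [IsFiniteMeasure ρ] (a : ℝ) {r c : ℝ}

lemma eventually_imRatio_lt (hρ : ∀ᵐ s ∂ρ, 0 ≤ s) (hr : 0 < r) (hc : 0 < c) :
    ∀ᶠ θ in 𝓝[<] π, θ ∈ Ioo 0 π ∧ imRatio ρ a r θ < c := by
  set C := ENNReal.ofReal (1 + r⁻¹ ^ 2) * ρ univ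
  have hlim : Tendsto (fun θ => ENNReal.ofReal (r * sinc θ) * C) (𝓝 π) (𝓝 0) := by
    simpa [sinc_of_ne_zero pi_ne_zero] using ENNReal.Tendsto.mul_const
      ((ENNReal.continuous_ofReal.comp (continuous_const.mul continuous_sinc)).tendsto π)
      (Or.inr (ENNReal.mul_ne_top ofReal_ne_top (measure_ne_top ρ univ)))
  filter_upwards [Ioo_mem_nhdsLT (half_lt_self pi_pos), nhdsWithin_le_nhds
    (hlim.eventually (gt_mem_nhds (ENNReal.ofReal_pos.2 hc)))] with θ hθ hθc
  have hθ' : θ ∈ Ioo 0 π := ⟨(half_pos pi_pos).trans hθ.1, hθ.2⟩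
  refine ⟨hθ', (ENNReal.ofReal_lt_ofReal_iff hc).1 (lt_of_le_of_lt ?_ hθc)⟩
  have hre : ((r : ℂ) * Complex.exp (θ * Complex.I)).re ≤ 0 := by
    rw [re_ofReal_mul_exp]
    exact mul_nonpos_of_nonneg_of_nonpos hr.le
      (cos_nonpos_of_pi_div_two_le_of_le hθ.1.le (by linarith [hθ.2, pi_pos]))
  have hne : (r : ℂ) * Complex.exp (θ * Complex.I) ≠ 0 :=
    mul_ne_zero (by exact_mod_cast hr.ne') (Complex.exp_ne_zero _)
  calc ENNReal.ofReal (imRatio ρ a r θ)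
      ≤ ∫⁻ _, ENNReal.ofReal (r * sinc θ) * ENNReal.ofReal (1 + r⁻¹ ^ 2) ∂ρ := by
        rw [ofReal_imRatio ρ a hr hθ']
        refine lintegral_mono_ae (hρ.mono fun s hs => ?_)
        have hw := poissonWeight_le_of_re_nonpos hne hre hs
        rw [norm_ofReal_mul_exp hr.le] at hw
        gcongr
    _ = ENNReal.ofReal (r * sinc θ) * C := by rw [lintegral_const, mul_assoc]

lemma eventually_lt_imRatio (hr : 0 < r) (hg : ENNReal.ofReal c < gfun ρ r) :
    ∀ᶠ θ in 𝓝[>] 0, c < imRatio ρ a r θ := by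
  set F : ℝ → ℝ → ℝ≥0∞ := fun θ s =>
    ENNReal.ofReal (r * sinc θ) * poissonWeight (r * Complex.exp (θ * Complex.I)) s
  have hF : ∀ s, Tendsto (fun θ => F θ s) (𝓝[>] 0) (𝓝 (ENNReal.ofReal r * poissonWeight r s)) := by
    intro s
    have h₁ : Tendsto (fun θ => ENNReal.ofReal (r * sinc θ)) (𝓝 0) (𝓝 (ENNReal.ofReal r)) :=
      (ENNReal.continuous_ofReal.comp (continuous_const.mul continuous_sinc)).tendsto' 0 _
        (by simp)
    have h₂ : Tendsto (fun θ : ℝ => poissonWeight (r * Complex.exp (θ * Complex.I)) s) (𝓝 0)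
        (𝓝 (poissonWeight r s)) :=
      ((continuous_poissonWeight_left s).comp
        (by fun_prop : Continuous fun θ : ℝ => (r : ℂ) * Complex.exp (θ * Complex.I))).tendsto' 0 _
        (by simp)
    exact (ENNReal.Tendsto.mul h₁ (Or.inl (ENNReal.ofReal_pos.2 hr).ne') h₂
      (Or.inr ofReal_ne_top)).mono_left nhdsWithin_le_nhds
  have hfatou : gfun ρ r ≤ liminf (fun θ => ENNReal.ofReal (imRatio ρ a r θ)) (𝓝[>] 0) := calc
    gfun ρ r = ∫⁻ s, liminf (fun θ => F θ s) (𝓝[>] 0) ∂ρ := by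
      rw [gfun_eq_lintegral_poissonWeight ρ hr.le]
      exact lintegral_congr fun s => (hF s).liminf_eq.symm
    _ ≤ liminf (fun θ => ∫⁻ s, F θ s ∂ρ) (𝓝[>] 0) :=
      lintegral_liminf_le fun θ => (measurable_poissonWeight _).const_mul _
    _ = liminf (fun θ => ENNReal.ofReal (imRatio ρ a r θ)) (𝓝[>] 0) := by
      refine liminf_congr ?_
      filter_upwards [Ioo_mem_nhdsGT pi_pos] with θ hθ using (ofReal_imRatio ρ a hr hθ).symm
  filter_upwards [eventually_lt_of_lt_liminf (hg.trans_le hfatou)] with θ hθ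
  exact (ENNReal.ofReal_lt_ofReal_iff'.1 hθ).1

lemma sInf_sublevel_imRatio_pos_iff (hρ : ∀ᵐ s ∂ρ, 0 ≤ s) (hr : 0 < r) (hc : 0 < c) :
    0 < sInf {θ | θ ∈ Ioo 0 π ∧ imRatio ρ a r θ < c} ↔ ENNReal.ofReal c < gfun ρ r := by
  constructor
  · intro hpos
    by_contra! hg
    have hS : {θ | θ ∈ Ioo 0 π ∧ imRatio ρ a r θ < c} = Ioo 0 π := by
      ext θ
      exact and_iff_left_of_imp (imRatio_lt_of_gfun_le ρ a hρ hr hc hg)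
    rw [hS, csInf_Ioo pi_pos] at hpos
    exact lt_irrefl _ hpos
  · intro hg
    obtain ⟨δ, hδ, hsub⟩ := mem_nhdsGT_iff_exists_Ioo_subset.1 (eventually_lt_imRatio ρ a hr hg)
    refine lt_of_lt_of_le hδ (le_csInf (eventually_imRatio_lt ρ a hρ hr hc).exists fun θ hθ => ?_)
    exact not_lt.1 fun hlt => lt_asymm (hsub ⟨hθ.1.1, hlt⟩) hθ.2

end ImRatioLimits

theorem stmt9 (ρ : Measure ℝ) [IsFiniteMeasure ρ] (hρ : ρ (Set.Iio 0) = 0)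
    (a t : ℝ) (ht : 1 < t) :
    (∀ r : ℝ, 0 < r →
      ({θ : ℝ | θ ∈ Set.Ioo 0 Real.pi ∧
          -(ufun ρ a ((r : ℂ) * Complex.exp ((θ : ℂ) * Complex.I))).im / θ
            < 1 / (t - 1)}).Nonempty ∧
        0 ≤ At ρ a t r ∧ At ρ a t r < Real.pi) ∧
    ({r : ℝ | 0 < r ∧ ENNReal.ofReal (1 / (t - 1)) < gfun ρ r} =
      {r : ℝ | 0 < r ∧ 0 < At ρ a t r}) ∧
    (∀ r : ℝ, 0 < r → ENNReal.ofReal (1 / (t - 1)) < gfun ρ r →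
      (ufun ρ a ((r : ℂ) * Complex.exp ((At ρ a t r : ℂ) * Complex.I))).im
        = -(At ρ a t r) / (t - 1)) := by
  have hρ' : ∀ᵐ s ∂ρ, 0 ≤ s := ae_iff.2 (measure_mono_null (fun s hs => not_le.1 hs) hρ)
  have hc : 0 < 1 / (t - 1) := one_div_pos.2 (sub_pos.2 ht)
  have hne : ∀ r, 0 < r → {θ | θ ∈ Ioo 0 π ∧ imRatio ρ a r θ < 1 / (t - 1)}.Nonempty :=
    fun r hr => (eventually_imRatio_lt ρ a hρ' hr hc).exists
  refine ⟨fun r hr => ⟨hne r hr, le_csInf (hne r hr) fun θ hθ => hθ.1.1.le, ?_⟩, ?_,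
    fun r hr hg => ?_⟩
  · obtain ⟨θ, hθ⟩ := hne r hr
    exact (csInf_le ⟨0, fun θ hθ => hθ.1.1.le⟩ hθ).trans_lt hθ.1.2
  · ext r
    exact and_congr_right fun hr => (sInf_sublevel_imRatio_pos_iff ρ a hρ' hr hc).symm
  · have hA : 0 < At ρ a t r := (sInf_sublevel_imRatio_pos_iff ρ a hρ' hr hc).2 hg
    have hval : imRatio ρ a r (At ρ a t r) = 1 / (t - 1) :=
      apply_csInf_sublevel_eq (continuousOn_imRatio ρ a hr) (hne r hr) hA
    rw [imRatio, div_eq_iff hA.ne'] at hval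
    linear_combination -hval
end

section
/- Let ρ be a finite positive Borel measure on [0,∞) and define g(r) = ∫_{[0,∞)} r(s²+1)/(r−s)² dρ(s) ∈ [0,∞] for r > 0. If I is an open interval with closure contained in (0,∞) on which g is bounded, then ρ(I) = 0 and g is convex on I; if moreover ρ ≠ 0, then g is strictly convex on I. -/
/-!
By Tonelli, `∫_I g = ∫ (∫_I r(s²+1)/(r-s)² dr) dρ(s)`, and for `s ∈ I` the inner integral
diverges since the integrand dominates `1/(r-s)` for `r > s ≥ 0`; so boundedness of `g` on `I`
forces `ρ(I) = 0`. Then for `ρ`-a.e. `s` the kernel `r ↦ r(s²+1)/(r-s)²` is smooth on `I` with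
second derivative `(s²+1)(2r+4s)/(r-s)⁴ > 0`, and `g` is an integral of strictly convex functions.
-/

open MeasureTheory Filter ENNReal

open Set

lemma integral_pos_of_ae_pos {α : Type*} [MeasurableSpace α] {μ : Measure α} [NeZero μ]
    {f : α → ℝ} (hf : Integrable f μ) (hpos : ∀ᵐ x ∂μ, 0 < f x) : 0 < ∫ x, f x ∂μ := by
  rw [integral_pos_iff_support_of_nonneg_ae (hpos.mono fun _ hx => hx.le) hf]
  have hsupp : ∀ᵐ x ∂μ, x ∈ Function.support f := hpos.mono fun _ hx => hx.ne'
  rw [measure_congr (ae_eq_univ.2 (ae_iff.1 hsupp))]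
  exact Measure.measure_univ_pos.2 (NeZero.ne μ)

lemma integral_mul_add_mul {α : Type*} [MeasurableSpace α] {μ : Measure α} {f g : α → ℝ}
    (hf : Integrable f μ) (hg : Integrable g μ) (a b : ℝ) :
    ∫ ω, a * f ω + b * g ω ∂μ = a * ∫ ω, f ω ∂μ + b * ∫ ω, g ω ∂μ := by
  rw [integral_add (hf.const_mul a) (hg.const_mul b), integral_const_mul, integral_const_mul]

section IntegralOfConvex

variable {α E : Type*} [MeasurableSpace α] {μ : Measure α} [AddCommMonoid E] [Module ℝ E]
  {D : Set E} {F : α → E → ℝ}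

lemma convexOn_integral (hD : Convex ℝ D) (hint : ∀ x ∈ D, Integrable (F · x) μ)
    (hF : ∀ᵐ ω ∂μ, ConvexOn ℝ D (F ω)) : ConvexOn ℝ D (fun x => ∫ ω, F ω x ∂μ) := by
  refine ⟨hD, fun x hx y hy a b ha hb hab => ?_⟩
  have hz := hD hx hy ha hb hab
  simp only [smul_eq_mul]
  rw [← integral_mul_add_mul (hint x hx) (hint y hy)]
  refine integral_mono_ae (hint _ hz) (((hint x hx).const_mul a).add ((hint y hy).const_mul b)) ?_
  filter_upwards [hF] with ω hω
  simpa only [smul_eq_mul] using hω.2 hx hy ha hb hab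

lemma strictConvexOn_integral [NeZero μ] (hD : Convex ℝ D) (hint : ∀ x ∈ D, Integrable (F · x) μ)
    (hF : ∀ᵐ ω ∂μ, StrictConvexOn ℝ D (F ω)) :
    StrictConvexOn ℝ D (fun x => ∫ ω, F ω x ∂μ) := by
  refine ⟨hD, fun x hx y hy hxy a b ha hb hab => ?_⟩
  have hz := hD hx hy ha.le hb.le hab
  simp only [smul_eq_mul]
  have hcomb : Integrable (fun ω => a * F ω x + b * F ω y) μ :=
    ((hint x hx).const_mul a).add ((hint y hy).const_mul b)
  rw [← integral_mul_add_mul (hint x hx) (hint y hy), ← sub_pos, ← integral_sub hcomb (hint _ hz)]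
  refine integral_pos_of_ae_pos (hcomb.sub (hint _ hz)) ?_
  filter_upwards [hF] with ω hω
  simpa only [smul_eq_mul, sub_pos] using hω.2 hx hy hxy ha hb hab

end IntegralOfConvex

-- Unlike the integrand of `gfun`, which is `⊤` at `s = r > 0`, this vanishes there.
noncomputable def gKernel (s r : ℝ) : ℝ := r * (s ^ 2 + 1) / (r - s) ^ 2

section Kernel

variable {s r : ℝ}

lemma gKernel_nonneg (hr : 0 ≤ r) : 0 ≤ gKernel s r := by
  unfold gKernel
  positivity

lemma measurable_gKernel_left (r : ℝ) : Measurable (gKernel · r) := by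
  unfold gKernel
  fun_prop

lemma hasDerivAt_gKernel (hrs : r ≠ s) :
    HasDerivAt (gKernel s) (-((s ^ 2 + 1) * (r + s)) / (r - s) ^ 3) r := by
  have hsub : r - s ≠ 0 := sub_ne_zero.mpr hrs
  refine (((hasDerivAt_id r).mul_const (s ^ 2 + 1)).fun_div
    (((hasDerivAt_id r).sub_const s).fun_pow 2) (pow_ne_zero 2 hsub)).congr_deriv ?_
  simp only [id]
  field_simp
  ring

lemma hasDerivAt_deriv_gKernel (hrs : r ≠ s) :
    HasDerivAt (fun r => -((s ^ 2 + 1) * (r + s)) / (r - s) ^ 3)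
      ((s ^ 2 + 1) * (2 * r + 4 * s) / (r - s) ^ 4) r := by
  have hsub : r - s ≠ 0 := sub_ne_zero.mpr hrs
  refine ((((hasDerivAt_id r).add_const s).const_mul (s ^ 2 + 1)).neg.fun_div
    (((hasDerivAt_id r).sub_const s).fun_pow 3) (pow_ne_zero 3 hsub)).congr_deriv ?_
  simp only [id, Pi.neg_apply]
  field_simp
  ring

lemma iteratedDeriv_two_gKernel (hrs : r ≠ s) :
    deriv^[2] (gKernel s) r = (s ^ 2 + 1) * (2 * r + 4 * s) / (r - s) ^ 4 := by
  have hderiv : deriv (gKernel s) =ᶠ[nhds r] fun r => -((s ^ 2 + 1) * (r + s)) / (r - s) ^ 3 :=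
    (isOpen_ne.eventually_mem hrs).mono fun _ h => (hasDerivAt_gKernel h).deriv
  exact hderiv.deriv_eq.trans (hasDerivAt_deriv_gKernel hrs).deriv

lemma strictConvexOn_gKernel {D : Set ℝ} (hD : Convex ℝ D) (hD₀ : D ⊆ Ici 0) (hs : 0 ≤ s)
    (hsD : s ∉ D) : StrictConvexOn ℝ D (gKernel s) := by
  have hne : ∀ r ∈ D, r ≠ s := fun r hr h => hsD (h ▸ hr)
  refine strictConvexOn_of_deriv2_pos hD
    (fun r hr => (hasDerivAt_gKernel (hne r hr)).continuousAt.continuousWithinAt) fun r hr => ?_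
  have hrs := hne r (interior_subset hr)
  have hr : 0 < r := by simpa using interior_mono hD₀ hr
  rw [iteratedDeriv_two_gKernel hrs]
  have : r - s ≠ 0 := sub_ne_zero.mpr hrs
  positivity

end Kernel

section Gfun

variable {ρ : Measure ℝ} {r : ℝ}

lemma setLIntegral_ofReal_inv_sub_eq_top {s t : ℝ} (hst : s < t) :
    ∫⁻ r in Ioo s t, ENNReal.ofReal (r - s)⁻¹ = ⊤ := by
  by_contra hfin
  have hnonneg : ∀ᵐ r ∂volume.restrict (Ioo s t), 0 ≤ (r - s)⁻¹ :=
    (ae_restrict_mem measurableSet_Ioo).mono fun r hr => inv_nonneg.2 (sub_nonneg.2 hr.1.le)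
  have hint : IntegrableOn (fun r => (r - s)⁻¹) (Ioo s t) :=
    (lintegral_ofReal_ne_top_iff_integrable (by fun_prop) hnonneg).1 hfin
  have := intervalIntegrable_sub_inv_iff.1
    ((intervalIntegrable_iff_integrableOn_Ioo_of_le hst.le).2 hint)
  simp [hst.ne, hst.le] at this

lemma setLIntegral_gfun_integrand_eq_top {s t : ℝ} (hs : 0 ≤ s) (hst : s < t) :
    ∫⁻ r in Ioo s t, ENNReal.ofReal (r * (s ^ 2 + 1)) / ENNReal.ofReal ((r - s) ^ 2) = ⊤ := by
  refine top_unique ((setLIntegral_ofReal_inv_sub_eq_top hst).symm.le.trans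
    (setLIntegral_mono' measurableSet_Ioo fun r hr => ?_))
  have hrs : 0 < r - s := sub_pos.2 hr.1
  rw [← ENNReal.ofReal_div_of_pos (by positivity)]
  refine ENNReal.ofReal_le_ofReal ?_
  rw [inv_eq_one_div, div_le_div_iff₀ hrs (by positivity)]
  nlinarith [mul_nonneg (hs.trans hr.1.le) (sq_nonneg s)]

lemma measure_eq_zero_of_setLIntegral_gfun_ne_top [SFinite ρ] {U : Set ℝ} (hUo : IsOpen U)
    (hU : U ⊆ Ici 0) (h : ∫⁻ r in U, gfun ρ r ≠ ⊤) : ρ U = 0 := by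
  set G : ℝ → ℝ → ℝ≥0∞ := fun s r => ENNReal.ofReal (r * (s ^ 2 + 1)) / ENNReal.ofReal ((r - s) ^ 2)
  have hG : Measurable (Function.uncurry G) := by
    simp only [G]
    fun_prop
  have hinner : ∀ s ∈ U, ∫⁻ r in U, G s r = ⊤ := by
    intro s hs
    obtain ⟨t, hst, hsub⟩ := exists_Ico_subset_of_mem_nhds (hUo.mem_nhds hs) (exists_gt s)
    exact top_unique ((setLIntegral_gfun_integrand_eq_top (hU hs) hst).symm.le.trans
      (lintegral_mono_set (Ioo_subset_Ico_self.trans hsub)))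
  contrapose! h
  refine top_unique ?_
  calc ⊤ = ∫⁻ s in U, ⊤ ∂ρ := by rw [setLIntegral_const, top_mul h]
    _ = ∫⁻ s in U, (∫⁻ r in U, G s r) ∂ρ := 
      setLIntegral_congr_fun hUo.measurableSet fun s hs => (hinner s hs).symm
    _ ≤ ∫⁻ s, (∫⁻ r in U, G s r) ∂ρ := setLIntegral_le_lintegral _ _
    _ = ∫⁻ r in U, gfun ρ r := lintegral_lintegral_swap hG.aemeasurable

lemma gfun_eq_lintegral_gKernel (h : ρ {r} = 0) :
    gfun ρ r = ∫⁻ s, ENNReal.ofReal (gKernel s r) ∂ρ := by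
  refine lintegral_congr_ae ((measure_eq_zero_iff_ae_notMem.1 h).mono fun s hs => ?_)
  have : r - s ≠ 0 := sub_ne_zero.2 (Ne.symm hs)
  exact (ENNReal.ofReal_div_of_pos (by positivity)).symm

lemma integrable_gKernel (hr : 0 ≤ r) (h : ρ {r} = 0) (hg : gfun ρ r ≠ ⊤) :
    Integrable (gKernel · r) ρ := by
  rw [gfun_eq_lintegral_gKernel h] at hg
  exact (lintegral_ofReal_ne_top_iff_integrable (measurable_gKernel_left r).aestronglyMeasurable
    (ae_of_all _ fun _ => gKernel_nonneg hr)).1 hg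

lemma toReal_gfun (hr : 0 ≤ r) (h : ρ {r} = 0) :
    (gfun ρ r).toReal = ∫ s, gKernel s r ∂ρ := by
  rw [gfun_eq_lintegral_gKernel h, integral_eq_lintegral_of_nonneg_ae
    (ae_of_all _ fun _ => gKernel_nonneg hr) (measurable_gKernel_left r).aestronglyMeasurable]

section ConvexDomain

variable {D : Set ℝ}

lemma ae_strictConvexOn_gKernel (hD : Convex ℝ D) (hD₀ : D ⊆ Ici 0) (hρ₀ : ρ (Iio 0) = 0)
    (hρD : ρ D = 0) : ∀ᵐ s ∂ρ, StrictConvexOn ℝ D (gKernel s) := by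
  filter_upwards [measure_eq_zero_iff_ae_notMem.1 hρ₀, measure_eq_zero_iff_ae_notMem.1 hρD]
    with s hs₀ hsD
  exact strictConvexOn_gKernel hD hD₀ (not_lt.1 hs₀) hsD

lemma convexOn_toReal_gfun (hD : Convex ℝ D) (hD₀ : D ⊆ Ici 0) (hρ₀ : ρ (Iio 0) = 0)
    (hρD : ρ D = 0) (hfin : ∀ r ∈ D, gfun ρ r ≠ ⊤) :
    ConvexOn ℝ D (fun r => (gfun ρ r).toReal) :=
  (convexOn_integral hD
    (fun r hr => integrable_gKernel (hD₀ hr) (measure_mono_null (singleton_subset_iff.2 hr) hρD) (hfin r hr))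
    ((ae_strictConvexOn_gKernel hD hD₀ hρ₀ hρD).mono fun _ h => h.convexOn)).congr
    fun _ hr => (toReal_gfun (hD₀ hr) (measure_mono_null (singleton_subset_iff.2 hr) hρD)).symm

lemma strictConvexOn_toReal_gfun [NeZero ρ] (hD : Convex ℝ D) (hD₀ : D ⊆ Ici 0)
    (hρ₀ : ρ (Iio 0) = 0) (hρD : ρ D = 0) (hfin : ∀ r ∈ D, gfun ρ r ≠ ⊤) :
    StrictConvexOn ℝ D (fun r => (gfun ρ r).toReal) :=
  (strictConvexOn_integral hD
    (fun r hr => integrable_gKernel (hD₀ hr) (measure_mono_null (singleton_subset_iff.2 hr) hρD) (hfin r hr))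
    (ae_strictConvexOn_gKernel hD hD₀ hρ₀ hρD)).congr
    fun _ hr => (toReal_gfun (hD₀ hr) (measure_mono_null (singleton_subset_iff.2 hr) hρD)).symm

end ConvexDomain

end Gfun

theorem stmt12 (ρ : Measure ℝ) [IsFiniteMeasure ρ] (hρ : ρ (Set.Iio 0) = 0)
    (c d : ℝ) (hI : closure (Set.Ioo c d) ⊆ Set.Ioi 0)
    (M : ℝ) (hM : ∀ r ∈ Set.Ioo c d, gfun ρ r ≤ ENNReal.ofReal M) :
    ρ (Set.Ioo c d) = 0 ∧
    ConvexOn ℝ (Set.Ioo c d) (fun r => (gfun ρ r).toReal) ∧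
    (ρ ≠ 0 → StrictConvexOn ℝ (Set.Ioo c d) (fun r => (gfun ρ r).toReal)) := by
  have hI₀ : Ioo c d ⊆ Ici 0 := subset_closure.trans (hI.trans Ioi_subset_Ici_self)
  have hfin : ∀ r ∈ Ioo c d, gfun ρ r ≠ ⊤ := fun r hr => ne_top_of_le_ne_top ofReal_ne_top (hM r hr)
  have hint : ∫⁻ r in Ioo c d, gfun ρ r ≠ ⊤ := by
    refine ne_top_of_le_ne_top ?_ (setLIntegral_mono' measurableSet_Ioo hM)
    rw [setLIntegral_const, Real.volume_Ioo]
    exact mul_ne_top ofReal_ne_top ofReal_ne_top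
  have hnull := measure_eq_zero_of_setLIntegral_gfun_ne_top isOpen_Ioo hI₀ hint
  refine ⟨hnull, convexOn_toReal_gfun (convex_Ioo c d) hI₀ hρ hnull hfin, fun hρ0 => ?_⟩
  have : NeZero ρ := ⟨hρ0⟩
  exact strictConvexOn_toReal_gfun (convex_Ioo c d) hI₀ hρ hnull hfin
end

section
/- Let ρ be a finite positive Borel measure on the unit circle 𝕋, α ∈ ℝ, u(z) = iα + ∫_𝕋 (ζ+z)/(ζ−z) dρ(ζ) for z ∈ 𝔻, and for t > 1 let Φ_t(z) = z·exp((t−1)u(z)). If z ∈ 𝔻 satisfies |Φ_t(z)| < 1, then |Φ_t(sz)| < 1 for every s ∈ (0,1]; that is, the line segment joining the origin to z is contained in Ω_t = {w ∈ 𝔻 : |Φ_t(w)| < 1}. -/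
/-!
Write `P(w) = ∫ Re ((ζ + w) / (ζ - w)) dρ(ζ)` for the Poisson integral of `ρ`, so that
`|Φ_t(w)| = |w| exp ((t - 1) P(w))` and `|Φ_t(w)| < 1` iff `(t - 1) P(w) < -log |w|`.
With `r = |z|`, comparing `|ζ - z|` with `|ζ - s z|` on the unit circle gives the Harnack-type
estimate `P(s z) ≤ K P(z)`, `K = (1 + r)(1 - s r) / ((1 - r)(1 + s r))`, and the two classical
bounds `2 (1 - s) / (1 + s) ≤ -log s` and `-log r ≤ (1 / r - r) / 2` show that
`K (-log r) ≤ -log (s r)`.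
-/

open MeasureTheory Filter

/-- u(z) = iα + ∫_𝕋 (ζ+z)/(ζ−z) dρ(ζ). -/
noncomputable def uT (ρ : Measure ℂ) (α : ℝ) (z : ℂ) : ℂ :=
  Complex.I * (α : ℂ) + ∫ ζ : ℂ, (ζ + z) / (ζ - z) ∂ρ

/-- Φ_t(z) = z·exp((t−1)·u(z)). -/
noncomputable def PhiT (ρ : Measure ℂ) (α t : ℝ) (z : ℂ) : ℂ :=
  z * Complex.exp (((t : ℂ) - 1) * uT ρ α z)

open Real RealInnerProductSpace

lemma neg_log_le_inv_sub_div_two {r : ℝ} (hr0 : 0 < r) (hr1 : r ≤ 1) :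
    -log r ≤ (r⁻¹ - r) / 2 := by
  have h := self_le_sinh_iff.mpr (neg_nonneg.mpr (log_nonpos hr0.le hr1))
  rwa [sinh_eq, neg_neg, exp_log hr0, exp_neg, exp_log hr0] at h

lemma two_mul_one_sub_div_one_add_le_neg_log {s : ℝ} (hs0 : 0 < s) (hs1 : s ≤ 1) :
    2 * (1 - s) / (1 + s) ≤ -log s := by
  set x := (1 - s) / (1 + s) with hx
  have hx0 : 0 ≤ x := div_nonneg (by linarith) (by linarith)
  have hx1 : x < 1 := (div_lt_one (by linarith)).mpr (by linarith)
  have hlog : log (1 + x) - log (1 - x) = -log s := by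
    have h1 : 1 + x = 2 / (1 + s) := by rw [hx]; field_simp; ring
    have h2 : 1 - x = 2 * s / (1 + s) := by rw [hx]; field_simp; ring
    rw [h1, h2, log_div (by norm_num) (by linarith), log_div (by positivity) (by linarith),
      log_mul (by norm_num) hs0.ne']
    ring
  -- the leading term `2 x` of the series for `log ((1 + x) / (1 - x))`
  have hsum := hasSum_log_sub_log_of_abs_lt_one (abs_lt.mpr ⟨by linarith, hx1⟩)
  simpa [hlog, mul_div_assoc] using le_hasSum hsum 0 fun k _ => by positivity

lemma mul_neg_log_le_neg_log_mul {r s : ℝ} (hr0 : 0 < r) (hr1 : r < 1) (hs0 : 0 < s)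
    (hs1 : s ≤ 1) :
    (1 + r) * (1 - s * r) / ((1 - r) * (1 + s * r)) * -log r ≤ -log (s * r) := by
  have h1r : 0 < 1 - r := by linarith
  have hsr : 0 < 1 + s * r := by positivity
  have hrL : r * -log r ≤ (1 - r ^ 2) / 2 := by
    have := mul_le_mul_of_nonneg_left (neg_log_le_inv_sub_div_two hr0 hr1.le) hr0.le
    rwa [mul_div_assoc', mul_sub, mul_inv_cancel₀ hr0.ne', ← sq] at this
  calc (1 + r) * (1 - s * r) / ((1 - r) * (1 + s * r)) * -log r
      = -log r + 2 * (1 - s) / ((1 - r) * (1 + s * r)) * (r * -log r) := by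
        field_simp; ring
    _ ≤ -log r + 2 * (1 - s) / ((1 - r) * (1 + s * r)) * ((1 - r ^ 2) / 2) := by
        gcongr
    _ = -log r + (1 - s) * (1 + r) / (1 + s * r) := by
        field_simp; ring
    _ ≤ -log r + 2 * (1 - s) / (1 + s) := by
        gcongr _ + ?_
        rw [div_le_div_iff₀ hsr (by linarith)]
        nlinarith [mul_nonneg (mul_nonneg (sub_nonneg.mpr hs1) (sub_nonneg.mpr hs1)) h1r.le]
    _ ≤ -log r + -log s := by gcongr; exact two_mul_one_sub_div_one_add_le_neg_log hs0 hs1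
    _ = -log (s * r) := by rw [log_mul hs0.ne' hr0.ne']; ring

lemma one_add_mul_norm_sq_mul_norm_sub_sq_le {E : Type*} [NormedAddCommGroup E]
    [InnerProductSpace ℝ E] {ζ z : E} (hζ : ‖ζ‖ = 1) (hz : ‖z‖ ≤ 1) {s : ℝ} (hs0 : 0 ≤ s)
    (hs1 : s ≤ 1) :
    (1 + s * ‖z‖) ^ 2 * ‖ζ - z‖ ^ 2 ≤ (1 + ‖z‖) ^ 2 * ‖ζ - s • z‖ ^ 2 := by
  have hinner : -‖z‖ ≤ ⟪ζ, z⟫ := by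
    have := neg_abs_le ⟪ζ, z⟫
    have := abs_real_inner_le_norm ζ z
    rw [hζ, one_mul] at this
    linarith
  have hsz : s * ‖z‖ ^ 2 ≤ 1 := by nlinarith [norm_nonneg z]
  rw [norm_sub_sq_real, norm_sub_sq_real, real_inner_smul_right, norm_smul, hζ,
    Real.norm_of_nonneg hs0]
  -- the difference of the two sides is `2 (1 - s) (1 - s ‖z‖²) (⟪ζ, z⟫ + ‖z‖)`
  nlinarith [mul_nonneg (mul_nonneg (sub_nonneg.2 hs1) (sub_nonneg.2 hsz))
    (neg_le_iff_add_nonneg.mp hinner)]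

lemma re_add_div_sub_of_norm_eq_one {ζ : ℂ} (hζ : ‖ζ‖ = 1) (w : ℂ) :
    ((ζ + w) / (ζ - w)).re = (1 - ‖w‖ ^ 2) / ‖ζ - w‖ ^ 2 := by
  have h1 : Complex.normSq ζ = 1 := by rw [Complex.normSq_eq_norm_sq, hζ, one_pow]
  rw [Complex.div_re, ← add_div, ← Complex.normSq_eq_norm_sq, ← Complex.normSq_eq_norm_sq]
  congr 1
  simp only [Complex.add_re, Complex.add_im, Complex.sub_re, Complex.sub_im,
    Complex.normSq_apply] at h1 ⊢
  linear_combination h1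

lemma re_add_div_sub_ofReal_mul_le {ζ z : ℂ} (hζ : ‖ζ‖ = 1) (hz : ‖z‖ < 1) {s : ℝ} (hs0 : 0 < s)
    (hs1 : s ≤ 1) :
    ((ζ + s * z) / (ζ - s * z)).re ≤
      (1 + ‖z‖) * (1 - s * ‖z‖) / ((1 - ‖z‖) * (1 + s * ‖z‖)) * ((ζ + z) / (ζ - z)).re := by
  have key := one_add_mul_norm_sq_mul_norm_sub_sq_le hζ hz.le hs0.le hs1
  rw [Complex.real_smul] at key
  have hsz : ‖(s : ℂ) * z‖ = s * ‖z‖ := by simp [abs_of_pos hs0]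
  have hsr : s * ‖z‖ < 1 := by nlinarith [norm_nonneg z]
  have hpos : ∀ w : ℂ, ‖w‖ < 1 → 0 < ‖ζ - w‖ ^ 2 := fun w hw => by
    have := norm_sub_norm_le ζ w
    nlinarith
  rw [re_add_div_sub_of_norm_eq_one hζ, re_add_div_sub_of_norm_eq_one hζ, hsz,
    div_mul_div_comm, div_le_div_iff₀ (hpos _ (hsz ▸ hsr))
      (mul_pos (mul_pos (by linarith) (by positivity)) (hpos z hz))]
  nlinarith [mul_le_mul_of_nonneg_left key
    (mul_nonneg (sub_nonneg.2 hsr.le) (sub_nonneg.2 hz.le))]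

lemma integrable_add_div_sub {ρ : Measure ℂ} [IsFiniteMeasure ρ] (hρ : ∀ᵐ ζ ∂ρ, ‖ζ‖ = 1)
    {w : ℂ} (hw : ‖w‖ < 1) : Integrable (fun ζ => (ζ + w) / (ζ - w)) ρ := by
  refine Integrable.mono' (integrable_const ((1 + ‖w‖) / (1 - ‖w‖)))
    ((measurable_id.add_const w).div (measurable_id.sub_const w)).aestronglyMeasurable ?_
  filter_upwards [hρ] with ζ hζ
  rw [norm_div]
  have hnum : ‖ζ + w‖ ≤ 1 + ‖w‖ := hζ ▸ norm_add_le ζ w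
  have hden : 1 - ‖w‖ ≤ ‖ζ - w‖ := hζ ▸ norm_sub_norm_le ζ w
  exact div_le_div₀ (by positivity) hnum (by linarith) hden

noncomputable def poissonIntegral (ρ : Measure ℂ) (w : ℂ) : ℝ :=
  ∫ ζ, ((ζ + w) / (ζ - w)).re ∂ρ

lemma norm_PhiT {ρ : Measure ℂ} {w : ℂ} (hint : Integrable (fun ζ => (ζ + w) / (ζ - w)) ρ)
    (α t : ℝ) : ‖PhiT ρ α t w‖ = ‖w‖ * exp ((t - 1) * poissonIntegral ρ w) := by
  have hre : (uT ρ α w).re = poissonIntegral ρ w := by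
    simpa [uT, poissonIntegral] using (integral_re hint).symm
  rw [PhiT, norm_mul, Complex.norm_exp, ← Complex.ofReal_one, ← Complex.ofReal_sub,
    Complex.re_ofReal_mul, hre]

lemma norm_PhiT_lt_one_iff {ρ : Measure ℂ} {w : ℂ} (hw : w ≠ 0)
    (hint : Integrable (fun ζ => (ζ + w) / (ζ - w)) ρ) (α t : ℝ) :
    ‖PhiT ρ α t w‖ < 1 ↔ (t - 1) * poissonIntegral ρ w < -log ‖w‖ := by
  have hw0 : 0 < ‖w‖ := norm_pos_iff.mpr hw
  rw [norm_PhiT hint, ← lt_div_iff₀' hw0, ← log_inv, lt_log_iff_exp_lt (by positivity),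
    one_div]

lemma poissonIntegral_ofReal_mul_le {ρ : Measure ℂ} [IsFiniteMeasure ρ]
    (hρ : ∀ᵐ ζ ∂ρ, ‖ζ‖ = 1) {z : ℂ} (hz : ‖z‖ < 1) {s : ℝ} (hs0 : 0 < s) (hs1 : s ≤ 1) :
    poissonIntegral ρ (s * z) ≤
      (1 + ‖z‖) * (1 - s * ‖z‖) / ((1 - ‖z‖) * (1 + s * ‖z‖)) * poissonIntegral ρ z := by
  have hsz : ‖(s : ℂ) * z‖ < 1 := by
    rw [norm_mul, Complex.norm_real, Real.norm_of_nonneg hs0.le]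
    nlinarith [norm_nonneg z]
  rw [poissonIntegral, poissonIntegral, ← integral_const_mul]
  refine integral_mono_ae (integrable_add_div_sub hρ hsz).re
    ((integrable_add_div_sub hρ hz).re.const_mul _) ?_
  filter_upwards [hρ] with ζ hζ
  exact re_add_div_sub_ofReal_mul_le hζ hz hs0 hs1

theorem stmt17 (ρ : Measure ℂ) [IsFiniteMeasure ρ]
    (hρ : ρ {z : ℂ | ‖z‖ = 1}ᶜ = 0)
    (α t : ℝ) (ht : 1 < t)
    (z : ℂ) (hz : ‖z‖ < 1) (hΦ : ‖PhiT ρ α t z‖ < 1)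
    (s : ℝ) (hs : s ∈ Set.Ioc (0 : ℝ) 1) :
    ‖PhiT ρ α t ((s : ℂ) * z)‖ < 1 := by
  obtain ⟨hs0, hs1⟩ := hs
  have hρ' : ∀ᵐ ζ ∂ρ, ‖ζ‖ = 1 := ae_iff.mpr (by rwa [← Set.compl_ofPred])
  rcases eq_or_ne z 0 with rfl | hz0
  · simp [PhiT]
  have hr0 : 0 < ‖z‖ := norm_pos_iff.mpr hz0
  have hsz : ‖(s : ℂ) * z‖ = s * ‖z‖ := by simp [abs_of_pos hs0]
  have hsr : s * ‖z‖ < 1 := by nlinarith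
  rw [norm_PhiT_lt_one_iff hz0 (integrable_add_div_sub hρ' hz)] at hΦ
  rw [norm_PhiT_lt_one_iff (by simp [hs0.ne', hz0])
    (integrable_add_div_sub hρ' (hsz ▸ hsr)), hsz]
  set K := (1 + ‖z‖) * (1 - s * ‖z‖) / ((1 - ‖z‖) * (1 + s * ‖z‖))
  have hK : 0 < K :=
    div_pos (mul_pos (by linarith) (by linarith)) (mul_pos (by linarith) (by positivity))
  calc (t - 1) * poissonIntegral ρ (s * z)
      ≤ (t - 1) * (K * poissonIntegral ρ z) := by
        gcongr
        exact poissonIntegral_ofReal_mul_le hρ' hz hs0 hs1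
    _ = K * ((t - 1) * poissonIntegral ρ z) := by ring
    _ < K * -log ‖z‖ := by gcongr
    _ ≤ -log (s * ‖z‖) := mul_neg_log_le_neg_log_mul hr0 hz hs0 hs1
end

section
/- Let ρ be a finite positive Borel measure on the unit circle 𝕋, α ∈ ℝ, u(z) = iα + ∫_𝕋 (ζ+z)/(ζ−z) dρ(ζ) for z ∈ 𝔻, t > 1, Φ_t(z) = z·exp((t−1)u(z)), and Ω_t = {z ∈ 𝔻 : |Φ_t(z)| < 1}. Then u restricted to Ω_t is Lipschitz continuous: there exists L ≥ 0 such that |u(z₁) − u(z₂)| ≤ L·|z₁ − z₂| for all z₁, z₂ ∈ Ω_t. Consequently, u restricted to Ω_t extends to a continuous function on the closure of Ω_t. -/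
/-!
On the unit disc the real part of `u` is `(1 - |z|²) P(z)` with `P(z) = ∫ |ζ - z|⁻² dρ(ζ)`,
and `|u(z₁) - u(z₂)| ≤ |z₁ - z₂| (P(z₁) + P(z₂))`, since the kernel difference is
`2ζ (z₁ - z₂) / ((ζ - z₁)(ζ - z₂))` and `2ab ≤ a² + b²`. So it suffices to bound `P` on `Ω_t`.
Near the origin `P ≤ 4 ρ(𝕋)` trivially. Elsewhere, `e^x ≥ 1 + x` turns
`|z| e^{(t-1) Re u(z)} < 1` into `|z| (1 + |z|) (t - 1) P(z) < 1`, so `P(z) ≤ 2 / (t - 1)` once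
`|z| ≥ 1/2`. The continuous extension to the closure is then the Lipschitz extension to the
whole plane.
-/

open MeasureTheory Filter

/-- Ω_t = {z ∈ 𝔻 : |Φ_t(z)| < 1}. -/
def OmegaTset (ρ : Measure ℂ) (α t : ℝ) : Set ℂ :=
  {z : ℂ | ‖z‖ < 1 ∧ ‖PhiT ρ α t z‖ < 1}

section HerglotzKernel

variable {ζ z : ℂ}

lemma one_sub_norm_le_norm_sub (hζ : ‖ζ‖ = 1) : 1 - ‖z‖ ≤ ‖ζ - z‖ := by
  simpa [hζ] using norm_sub_norm_le ζ z

lemma sub_ne_zero_of_norm_eq_one_of_norm_lt_one (hζ : ‖ζ‖ = 1) (hz : ‖z‖ < 1) : ζ - z ≠ 0 :=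
  norm_pos_iff.mp (by linarith [one_sub_norm_le_norm_sub (z := z) hζ])

lemma norm_herglotzKernel_le (hζ : ‖ζ‖ = 1) (hz : ‖z‖ < 1) :
    ‖(ζ + z) / (ζ - z)‖ ≤ 2 / (1 - ‖z‖) := by
  rw [norm_div]
  refine div_le_div₀ zero_le_two ?_ (by linarith) (one_sub_norm_le_norm_sub hζ)
  linarith [norm_add_le ζ z]

lemma re_herglotzKernel (hζ : ‖ζ‖ = 1) (hz : ‖z‖ < 1) :
    ((ζ + z) / (ζ - z)).re = (1 - ‖z‖ ^ 2) / ‖ζ - z‖ ^ 2 := by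
  have hne : Complex.normSq (ζ - z) ≠ 0 :=
    Complex.normSq_eq_zero.not.mpr (sub_ne_zero_of_norm_eq_one_of_norm_lt_one hζ hz)
  have hζ' : ζ.re * ζ.re + ζ.im * ζ.im = 1 := by
    rw [← Complex.normSq_apply, ← Complex.sq_norm, hζ, one_pow]
  rw [Complex.div_re, Complex.sq_norm, Complex.sq_norm, ← add_div, div_left_inj' hne]
  simp only [Complex.normSq_apply, Complex.add_re, Complex.add_im, Complex.sub_re,
    Complex.sub_im]
  linear_combination hζ'

lemma norm_herglotzKernel_sub_le {z₁ z₂ : ℂ} (hζ : ‖ζ‖ = 1) (h₁ : ‖z₁‖ < 1) (h₂ : ‖z₂‖ < 1) :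
    ‖(ζ + z₁) / (ζ - z₁) - (ζ + z₂) / (ζ - z₂)‖ ≤
      ‖z₁ - z₂‖ * ((‖ζ - z₁‖ ^ 2)⁻¹ + (‖ζ - z₂‖ ^ 2)⁻¹) := by
  have hne₁ := sub_ne_zero_of_norm_eq_one_of_norm_lt_one hζ h₁
  have hne₂ := sub_ne_zero_of_norm_eq_one_of_norm_lt_one hζ h₂
  have hdiff : (ζ + z₁) / (ζ - z₁) - (ζ + z₂) / (ζ - z₂)
      = 2 * ζ * (z₁ - z₂) / ((ζ - z₁) * (ζ - z₂)) := by
    field_simp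
    ring
  have hnorm : ‖2 * ζ * (z₁ - z₂) / ((ζ - z₁) * (ζ - z₂))‖
      = ‖z₁ - z₂‖ * (2 * (‖ζ - z₁‖⁻¹ * ‖ζ - z₂‖⁻¹)) := by
    simp only [norm_div, norm_mul, hζ, Complex.norm_ofNat]
    field_simp
  have amgm : 2 * (‖ζ - z₁‖⁻¹ * ‖ζ - z₂‖⁻¹) ≤ (‖ζ - z₁‖ ^ 2)⁻¹ + (‖ζ - z₂‖ ^ 2)⁻¹ := by
    simp only [← inv_pow]
    nlinarith [sq_nonneg (‖ζ - z₁‖⁻¹ - ‖ζ - z₂‖⁻¹)]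
  rw [hdiff, hnorm]
  gcongr

end HerglotzKernel

lemma norm_PhiT_s19 (ρ : Measure ℂ) (α t : ℝ) (z : ℂ) :
    ‖PhiT ρ α t z‖ = ‖z‖ * Real.exp ((t - 1) * (uT ρ α z).re) := by
  rw [PhiT, norm_mul, Complex.norm_exp, show (t : ℂ) - 1 = ((t - 1 : ℝ) : ℂ) by push_cast; ring,
    Complex.re_ofReal_mul]

section CircleMeasure

variable {ρ : Measure ℂ} [IsFiniteMeasure ρ] (hρ : ∀ᵐ ζ ∂ρ, ‖ζ‖ = 1) {z : ℂ}
include hρ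

lemma integrable_herglotzKernel (hz : ‖z‖ < 1) :
    Integrable (fun ζ => (ζ + z) / (ζ - z)) ρ := by
  refine Integrable.of_bound (Measurable.aestronglyMeasurable (by fun_prop)) (2 / (1 - ‖z‖)) ?_
  filter_upwards [hρ] with ζ hζ using norm_herglotzKernel_le hζ hz

lemma integrable_inv_norm_sub_sq (hz : ‖z‖ < 1) :
    Integrable (fun ζ => (‖ζ - z‖ ^ 2)⁻¹) ρ := by
  refine Integrable.of_bound (by fun_prop) ((1 - ‖z‖) ^ 2)⁻¹ ?_
  filter_upwards [hρ] with ζ hζ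
  rw [Real.norm_of_nonneg (by positivity)]
  gcongr
  exact one_sub_norm_le_norm_sub hζ

lemma re_uT (α : ℝ) (hz : ‖z‖ < 1) :
    (uT ρ α z).re = (1 - ‖z‖ ^ 2) * ∫ ζ, (‖ζ - z‖ ^ 2)⁻¹ ∂ρ := by
  rw [uT, Complex.add_re, Complex.re_mul_ofReal, Complex.I_re, zero_mul, zero_add,
    ← RCLike.re_to_complex, ← integral_re (integrable_herglotzKernel hρ hz), ← integral_const_mul]
  refine integral_congr_ae ?_
  filter_upwards [hρ] with ζ hζ
  rw [RCLike.re_to_complex, re_herglotzKernel hζ hz, div_eq_mul_inv]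

lemma norm_uT_sub_le (α : ℝ) {z₁ z₂ : ℂ} (h₁ : ‖z₁‖ < 1) (h₂ : ‖z₂‖ < 1) :
    ‖uT ρ α z₁ - uT ρ α z₂‖ ≤
      ‖z₁ - z₂‖ * ((∫ ζ, (‖ζ - z₁‖ ^ 2)⁻¹ ∂ρ) + ∫ ζ, (‖ζ - z₂‖ ^ 2)⁻¹ ∂ρ) := by
  have hP₁ := integrable_inv_norm_sub_sq hρ h₁
  have hP₂ := integrable_inv_norm_sub_sq hρ h₂
  rw [uT, uT, add_sub_add_left_eq_sub, ← integral_sub (integrable_herglotzKernel hρ h₁)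
    (integrable_herglotzKernel hρ h₂), ← integral_add hP₁ hP₂, ← integral_const_mul]
  refine norm_integral_le_of_norm_le ((hP₁.add hP₂).const_mul _) ?_
  filter_upwards [hρ] with ζ hζ using norm_herglotzKernel_sub_le hζ h₁ h₂

lemma integral_inv_norm_sub_sq_le_of_norm_le_half (hz : ‖z‖ ≤ 1 / 2) :
    ∫ ζ, (‖ζ - z‖ ^ 2)⁻¹ ∂ρ ≤ 4 * ρ.real Set.univ := by
  have hbound : ∀ᵐ ζ ∂ρ, (‖ζ - z‖ ^ 2)⁻¹ ≤ (4 : ℝ) := by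
    filter_upwards [hρ] with ζ hζ
    have h : 1 / 2 ≤ ‖ζ - z‖ := by linarith [one_sub_norm_le_norm_sub (z := z) hζ]
    calc (‖ζ - z‖ ^ 2)⁻¹ ≤ ((1 / 2 : ℝ) ^ 2)⁻¹ := by gcongr
      _ = 4 := by norm_num
  calc ∫ ζ, (‖ζ - z‖ ^ 2)⁻¹ ∂ρ ≤ ∫ _, (4 : ℝ) ∂ρ :=
        integral_mono_ae (integrable_inv_norm_sub_sq hρ (by linarith)) (integrable_const _) hbound
    _ = 4 * ρ.real Set.univ := by rw [integral_const, smul_eq_mul, mul_comm]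

lemma integral_inv_norm_sub_sq_le_of_mem_OmegaTset {α t : ℝ} (ht : 1 < t)
    (hz : z ∈ OmegaTset ρ α t) (hz_half : 1 / 2 ≤ ‖z‖) :
    ∫ ζ, (‖ζ - z‖ ^ 2)⁻¹ ∂ρ ≤ 2 / (t - 1) := by
  obtain ⟨hz₁, hΦ⟩ := hz
  set P := ∫ ζ, (‖ζ - z‖ ^ 2)⁻¹ ∂ρ
  have hP : 0 ≤ P := integral_nonneg fun ζ => by positivity
  have ht₀ : 0 < t - 1 := by linarith
  have hexp : ‖z‖ * ((t - 1) * ((1 - ‖z‖ ^ 2) * P) + 1) < 1 := by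
    rw [norm_PhiT_s19, re_uT hρ α hz₁] at hΦ
    exact lt_of_le_of_lt (by gcongr; exact Real.add_one_le_exp _) hΦ
  -- `hexp` reads `(1 - |z|) (|z| (1 + |z|) (t - 1) P - 1) < 0`.
  have hkey : ‖z‖ * (1 + ‖z‖) * ((t - 1) * P) < 1 := by
    by_contra! h
    nlinarith [mul_le_mul_of_nonneg_left h (by linarith : (0 : ℝ) ≤ 1 - ‖z‖)]
  rw [le_div_iff₀ ht₀]
  nlinarith [mul_nonneg ht₀.le hP]

lemma lipschitzOnWith_uT_OmegaTset (α : ℝ) {t : ℝ} (ht : 1 < t) :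
    ∃ K, LipschitzOnWith K (uT ρ α) (OmegaTset ρ α t) := by
  set M := max (2 / (t - 1)) (4 * ρ.real Set.univ)
  have hP : ∀ z ∈ OmegaTset ρ α t, ∫ ζ, (‖ζ - z‖ ^ 2)⁻¹ ∂ρ ≤ M := fun z hz => by
    rcases le_total ‖z‖ (1 / 2) with h | h
    · exact (integral_inv_norm_sub_sq_le_of_norm_le_half hρ h).trans (le_max_right _ _)
    · exact (integral_inv_norm_sub_sq_le_of_mem_OmegaTset hρ ht hz h).trans (le_max_left _ _)
  refine ⟨(2 * M).toNNReal, LipschitzOnWith.of_dist_le' fun z₁ h₁ z₂ h₂ => ?_⟩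
  rw [dist_eq_norm, dist_eq_norm]
  calc ‖uT ρ α z₁ - uT ρ α z₂‖
      ≤ ‖z₁ - z₂‖ * ((∫ ζ, (‖ζ - z₁‖ ^ 2)⁻¹ ∂ρ) + ∫ ζ, (‖ζ - z₂‖ ^ 2)⁻¹ ∂ρ) :=
        norm_uT_sub_le hρ α h₁.1 h₂.1
    _ ≤ ‖z₁ - z₂‖ * (M + M) := by gcongr <;> apply hP <;> assumption
    _ = 2 * M * ‖z₁ - z₂‖ := by ring

end CircleMeasure

theorem stmt19 (ρ : Measure ℂ) [IsFiniteMeasure ρ]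
    (hρ : ρ {z : ℂ | ‖z‖ = 1}ᶜ = 0)
    (α t : ℝ) (ht : 1 < t) :
    ∃ L : ℝ, 0 ≤ L ∧
      (∀ z₁ ∈ OmegaTset ρ α t, ∀ z₂ ∈ OmegaTset ρ α t,
        ‖uT ρ α z₁ - uT ρ α z₂‖ ≤ L * ‖z₁ - z₂‖) ∧
      ∃ v : ℂ → ℂ, ContinuousOn v (closure (OmegaTset ρ α t)) ∧
        ∀ z ∈ OmegaTset ρ α t, v z = uT ρ α z := by
  obtain ⟨K, hK⟩ := lipschitzOnWith_uT_OmegaTset (ae_iff.mpr hρ) α ht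
  obtain ⟨v, hv, hvu⟩ := hK.extend_finite_dimension
  refine ⟨K, K.coe_nonneg, fun z₁ h₁ z₂ h₂ => ?_, v, hv.continuous.continuousOn,
    fun z hz => (hvu hz).symm⟩
  simpa only [dist_eq_norm] using hK.dist_le_mul z₁ h₁ z₂ h₂
end
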